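/- arXiv:1209.0938 — 6 statements merged into one kernel-verified Lean document; each statement's English description precedes it below -/
import Mathlib

section
/- Let T be a tower diagram and let c₁ = (i, j₁) and c₂ = (i, j₂) be two cells in the same tower T_i of T. Assume that c₁ and c₂ both have flight paths in T, with flight numbers f₁ and f₂ respectively. Then |f₁ − f₂| ≥ |j₁ − j₂|. Moreover, if |j₁ − j₂| = 1 then |f₁ − f₂| = 1. -/
abbrev Cell : Type := ℕ × ℕ

/-- A tower diagram: a finite set of cells `(i, j)` with `i ≥ 1` that is downward
closed in each column. -/
def IsTowerDiagram (T : Finset Cell) : Prop :=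
  ∀ c ∈ T, 1 ≤ c.1 ∧ ∀ j' ≤ c.2, (c.1, j') ∈ T

/-- The flight path of a cell of `T` (F1: direct flight, F2: zigzag flight). -/
inductive FlightPath (T : Finset Cell) : Cell → Finset Cell → Prop
  | direct (i j : ℕ) (hmem : (i, j) ∈ T)
      (hnone : ∀ c ∈ T, ¬(c.1 < i ∧ c.1 + c.2 + 1 = i + j)) :
      FlightPath T (i, j) {(i, j)}
  | zigzag (i j i' j' : ℕ) (P : Finset Cell)
      (hmem : (i, j) ∈ T) (hmem' : (i', j') ∈ T)
      (hleft : i' < i) (hdiag : i' + j' + 1 = i + j)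
      (hclosest : ∀ c ∈ T, c.1 < i → c.1 + c.2 + 1 = i + j → c.1 ≤ i')
      (hup : (i', j' + 1) ∈ T)
      (hrec : FlightPath T (i', j') P) :
      FlightPath T (i, j) (insert (i, j) (insert (i', j' + 1) P))

/-- `FlightNumber T c f`: `c` has a flight path in `T` whose lexicographically
least cell has coordinate sum `f`. -/
def FlightNumber (T : Finset Cell) (c : Cell) (f : ℕ) : Prop :=
  ∃ P : Finset Cell, FlightPath T c P ∧
    ∃ m ∈ P, m.1 + m.2 = f ∧ ∀ p ∈ P, m.1 < p.1 ∨ (m.1 = p.1 ∧ m.2 ≤ p.2)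

/-- A corner cell: it has a flight path and no cell on top of it. -/
def IsCornerCell (T : Finset Cell) (c : Cell) : Prop :=
  c ∈ T ∧ (c.1, c.2 + 1) ∉ T ∧ ∃ P, FlightPath T c P

/-- `SlideAux T lo α T'` : sliding `α` into the subdiagram of `T` consisting of
the towers in columns `≥ lo` does not terminate and produces `T'`. -/
inductive SlideAux (T : Finset Cell) : ℕ → ℕ → Finset Cell → Prop
  | s1a (lo α : ℕ)
      (h1 : ∀ c ∈ T, lo ≤ c.1 → c.1 + c.2 + 1 ≠ α)
      (h2 : ∀ c ∈ T, lo ≤ c.1 → c.1 + c.2 ≠ α) :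
      SlideAux T lo α (insert (α, 0) T)
  | s1c (lo α : ℕ) (T' : Finset Cell)
      (h1 : ∀ c ∈ T, lo ≤ c.1 → c.1 + c.2 + 1 ≠ α)
      (h2 : (α, 0) ∈ T) (h2' : lo ≤ α) (h3 : (α, 1) ∈ T)
      (hrec : SlideAux T (α + 1) (α + 1) T') :
      SlideAux T lo α T'
  | s2a (lo α i j : ℕ)
      (hmem : (i, j) ∈ T) (hlo : lo ≤ i) (hdiag : i + j + 1 = α)
      (hmin : ∀ c ∈ T, lo ≤ c.1 → c.1 + c.2 + 1 = α → i ≤ c.1)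
      (htop : (i, j + 1) ∉ T) :
      SlideAux T lo α (insert (i, j + 1) T)
  | s2c (lo α i j : ℕ) (T' : Finset Cell)
      (hmem : (i, j) ∈ T) (hlo : lo ≤ i) (hdiag : i + j + 1 = α)
      (hmin : ∀ c ∈ T, lo ≤ c.1 → c.1 + c.2 + 1 = α → i ≤ c.1)
      (h1 : (i, j + 1) ∈ T) (h2 : (i, j + 2) ∈ T)
      (hrec : SlideAux T (i + 1) (α + 1) T') :
      SlideAux T lo α T'

/-- The slide `α ↘ T` does not terminate and produces `T'`. -/
def Slides (T : Finset Cell) (α : ℕ) (T' : Finset Cell) : Prop :=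
  SlideAux T 0 α T'

/-- Successive sliding of the letters of a word into the empty diagram. -/
inductive SRDiagram : List ℕ → Finset Cell → Prop
  | nil : SRDiagram [] ∅
  | snoc {w : List ℕ} {T T' : Finset Cell} {a : ℕ}
      (hw : SRDiagram w T) (ha : Slides T a T') :
      SRDiagram (w ++ [a]) T'

/-- The shape (underlying diagram) of a labelled tableau. -/
def shapeOf (R : Finset (Cell × ℕ)) : Finset Cell := R.image Prod.fst

/-- The recording tableau of the SR algorithm: the cell created at step `k` is
labelled `k`. -/
inductive SRRecord : List ℕ → Finset (Cell × ℕ) → Prop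
  | nil : SRRecord [] ∅
  | snoc {w : List ℕ} {R : Finset (Cell × ℕ)} {a : ℕ} {c : Cell}
      (hw : SRRecord w R) (hc : c ∉ shapeOf R)
      (ha : Slides (shapeOf R) a (insert c (shapeOf R))) :
      SRRecord (w ++ [a]) (insert (c, w.length + 1) R)

/-- The sliding tableau of the SR algorithm: each new cell `(i, j)` is labelled
`i + j`. -/
inductive SRSliding : List ℕ → Finset (Cell × ℕ) → Prop
  | nil : SRSliding [] ∅
  | snoc {w : List ℕ} {S : Finset (Cell × ℕ)} {a : ℕ} {c : Cell}
      (hw : SRSliding w S) (hc : c ∉ shapeOf S)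
      (ha : Slides (shapeOf S) a (insert c (shapeOf S))) :
      SRSliding (w ++ [a]) (insert (c, c.1 + c.2) S)

/-- A tower tableau: a bijective labelling of a tower diagram by `{1, …, n}`. -/
def IsTowerTableau (R : Finset (Cell × ℕ)) : Prop :=
  IsTowerDiagram (shapeOf R) ∧
  (∀ p ∈ R, ∀ q ∈ R, p.1 = q.1 → p = q) ∧
  R.image Prod.snd = Finset.Icc 1 R.card

/-- The subtableau of cells with labels `≤ a`. -/
def labelLE (R : Finset (Cell × ℕ)) (a : ℕ) : Finset (Cell × ℕ) :=
  R.filter fun p => p.2 ≤ a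

/-- A standard tower tableau. -/
def IsStandardTowerTableau (R : Finset (Cell × ℕ)) : Prop :=
  IsTowerTableau R ∧
  ∀ p ∈ R, IsTowerDiagram (shapeOf (labelLE R p.2)) ∧
    IsCornerCell (shapeOf (labelLE R p.2)) p.1

/-- `ReadsTo R w` : `w` is the reading word of the tableau `R`: the `k`-th letter
is the flight number, in `shape (R_{≤ k})`, of the cell labelled `k`. -/
def ReadsTo (R : Finset (Cell × ℕ)) (w : List ℕ) : Prop :=
  w.length = R.card ∧
  ∀ k : Fin w.length, ∀ c : Cell, (c, (k : ℕ) + 1) ∈ R →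
    FlightNumber (shapeOf (labelLE R ((k : ℕ) + 1))) c (w.get k)

/-- A word of positive integers. -/
def IsPosWord (w : List ℕ) : Prop := ∀ a ∈ w, 1 ≤ a

/-- The permutation represented by a word: the product of the corresponding
adjacent transpositions `sᵢ = (i, i+1)`. -/
def permOf (w : List ℕ) : Equiv.Perm ℕ :=
  (w.map fun i => Equiv.swap i (i + 1)).prod

/-- A reduced word: of minimal length among the positive words representing the
same permutation. -/
def IsReducedWord (w : List ℕ) : Prop :=
  IsPosWord w ∧
    ∀ w' : List ℕ, IsPosWord w' → permOf w' = permOf w → w.length ≤ w'.length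

/-- A finite permutation: an element of the direct limit `⋃ₙ Sₙ`. -/
def FinitePerm (ω : Equiv.Perm ℕ) : Prop := ∃ w, IsPosWord w ∧ permOf w = ω

/-- The Coxeter length of a finite permutation. -/
noncomputable def coxLength (ω : Equiv.Perm ℕ) : ℕ :=
  sInf {n | ∃ w : List ℕ, IsPosWord w ∧ permOf w = ω ∧ w.length = n}

/-- The Rothe diagram of a permutation (pairs written `(row, column)`). -/
def RotheDiagram (ω : Equiv.Perm ℕ) : Set (ℕ × ℕ) :=
  {p | 1 ≤ p.1 ∧ 1 ≤ p.2 ∧ p.2 < ω p.1 ∧ p.1 < ω.symm p.2}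

/-- Interchanging rows `i` and `i + 1` of a diagram. -/
def rowSwap (i : ℕ) (D : Set (ℕ × ℕ)) : Set (ℕ × ℕ) :=
  {p | (Equiv.swap i (i + 1) p.1, p.2) ∈ D}

/-- The natural labelling of a tower diagram: labels `1, …, n` go bottom to top
within each tower, taking the towers from right to left. -/
def naturalTableau (T : Finset Cell) : Finset (Cell × ℕ) :=
  T.image fun c => (c, (T.filter fun d => c.1 < d.1).card + c.2 + 1)

/-- A word in natural form: a concatenation of blocks, each a strictly
increasing run of consecutive integers, whose initial terms strictly decrease. -/
def IsNaturalForm (η : List ℕ) : Prop :=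
  ∃ blocks : List (List ℕ),
    η = blocks.flatten ∧
    (∀ b ∈ blocks, ∃ s len : ℕ, 1 ≤ len ∧ b = List.range' s len) ∧
    List.Chain' (· > ·) (blocks.map fun b => b.headI)

/-! The flight number of a cell is the diagonal of the F1 cell where its flight path ends. Run the
flights of two cells `c₁`, `c₂` side by side, with `c₂` weakly left of `c₁` and on a diagonal
`d₂ ≥ d₁`: each step lowers both diagonals by one, and by the closest-cell rule `c₂`'s flight stays
weakly left of `c₁`'s, so `c₁`'s flight cannot end first; hence `f₂ - f₁ ≥ d₂ - d₁`. For the cell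
directly above a cell, the two flights pass through vertically adjacent cells of the same towers,
which gives `f₂ = f₁ + 1`. -/

section FlightNumber

variable {T : Finset Cell}

theorem IsTowerDiagram.mem_of_le (hT : IsTowerDiagram T) {i j j' : ℕ} (h : (i, j) ∈ T)
    (hj : j' ≤ j) : (i, j') ∈ T :=
  (hT _ h).2 j' hj

theorem FlightPath.mem {c : Cell} {P : Finset Cell} (h : FlightPath T c P) : c ∈ P := by
  cases h <;> simp

theorem FlightPath.diag_le {c : Cell} {P : Finset Cell} (h : FlightPath T c P) :
    ∀ p ∈ P, p.1 + p.2 ≤ c.1 + c.2 := by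
  induction h with
  | direct => simp
  | zigzag i j a b Q _ _ _ hdiag _ _ _ ih =>
    simp only [Finset.mem_insert, forall_eq_or_imp]
    exact ⟨le_rfl, by omega, fun p hp => (ih p hp).trans (by omega)⟩

theorem FlightNumber.le_diag {c : Cell} {f : ℕ} (h : FlightNumber T c f) : f ≤ c.1 + c.2 := by
  obtain ⟨P, hP, m, hm, rfl, -⟩ := h
  exact hP.diag_le m hm

theorem FlightNumber.direct_or_zigzag {i j f : ℕ} (h : FlightNumber T (i, j) f) :
    (f = i + j ∧ ∀ c ∈ T, ¬(c.1 < i ∧ c.1 + c.2 + 1 = i + j)) ∨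
      ∃ a b, (a, b) ∈ T ∧ a < i ∧ a + b + 1 = i + j ∧
        (∀ c ∈ T, c.1 < i → c.1 + c.2 + 1 = i + j → c.1 ≤ a) ∧ (a, b + 1) ∈ T ∧
        FlightNumber T (a, b) f := by
  obtain ⟨P, hP, m, hm, hf, hmin⟩ := h
  cases hP with
  | direct _ _ _ hnone =>
    rw [Finset.mem_singleton] at hm
    subst hm
    exact Or.inl ⟨hf.symm, hnone⟩
  | zigzag _ _ a b Q _ hab hai hdiag hclosest hup hQ =>
    refine Or.inr ⟨a, b, hab, hai, hdiag, hclosest, hup, Q, hQ, m, ?_, hf,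
      fun p hp => hmin p (by simp [hp])⟩
    -- `(a, b) ∈ Q` lies lexicographically below both `(i, j)` and `(a, b + 1)`.
    have hm_le := hmin (a, b) (by simp [hQ.mem])
    simp only [Finset.mem_insert] at hm
    rcases hm with rfl | rfl | hm
    · simp at hm_le; omega
    · simp at hm_le
    · exact hm

theorem FlightNumber.add_diag_le_add_diag (hT : IsTowerDiagram T) {i₁ j₁ i₂ j₂ f₁ f₂ : ℕ}
    (h₁ : FlightNumber T (i₁, j₁) f₁) (h₂ : FlightNumber T (i₂, j₂) f₂)
    (hcol : i₂ ≤ i₁) (hdiag : i₁ + j₁ ≤ i₂ + j₂) : f₁ + (i₂ + j₂) ≤ f₂ + (i₁ + j₁) := by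
  induction i₁ using Nat.strong_induction_on generalizing j₁ i₂ j₂ f₁ f₂ with
  | _ i₁ ih =>
    rcases h₁.direct_or_zigzag with ⟨rfl, hnone⟩ | ⟨a, b, -, hai, hdiag₁, hclosest, -, hf₁⟩ <;>
      rcases h₂.direct_or_zigzag with ⟨rfl, -⟩ | ⟨c, e, hce, hci, hdiag₂, -, -, hf₂⟩
    · omega
    -- `c₂` lands at `(c, e)` with `c < i₁` and `c + e ≥ i₁ + j₁ - 1`, so its tower meets the
    -- diagonal just below `c₁`.
    · have hcell := hT.mem_of_le hce (j' := i₁ + j₁ - 1 - c) (by omega)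
      exact (hnone _ hcell ⟨by simp; omega, by simp; omega⟩).elim
    · have := hf₁.le_diag
      omega
    · have hca : c ≤ a :=
        hclosest (c, i₁ + j₁ - 1 - c) (hT.mem_of_le hce (by omega)) (by simp; omega)
          (by simp; omega)
      have := ih a hai hf₁ hf₂ hca (by omega)
      omega

theorem FlightNumber.eq_succ_of_above (hT : IsTowerDiagram T) {i j f f' : ℕ}
    (h : FlightNumber T (i, j) f) (h' : FlightNumber T (i, j + 1) f') : f' = f + 1 := by
  induction i using Nat.strong_induction_on generalizing j f f' with
  | _ i ih =>
    rcases h.direct_or_zigzag with ⟨rfl, hnone⟩ | ⟨a, b, -, hai, hdiag, hclosest, hup, hf⟩ <;>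
      rcases h'.direct_or_zigzag with ⟨rfl, hnone'⟩ | ⟨c, e, hce, hci, hdiag', hclosest', -, hf'⟩
    · omega
    · exact (hnone (c, e - 1) (hT.mem_of_le hce (by omega)) ⟨hci, by simp; omega⟩).elim
    · exact (hnone' (a, b + 1) hup ⟨hai, by simp; omega⟩).elim
    · obtain ⟨rfl, rfl⟩ : a = c ∧ e = b + 1 := by
        have := hclosest (c, e - 1) (hT.mem_of_le hce (by omega)) hci (by simp; omega)
        have := hclosest' (a, b + 1) hup hai (by simp; omega)
        omega
      exact ih a hai hf hf'

end FlightNumber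

theorem flightNumber_distance_in_tower_general
    (T : Finset Cell) (hT : IsTowerDiagram T)
    (i j₁ j₂ f₁ f₂ : ℕ)
    (hf₁ : FlightNumber T (i, j₁) f₁) (hf₂ : FlightNumber T (i, j₂) f₂) :
    |(f₁ : ℤ) - (f₂ : ℤ)| ≥ |(j₁ : ℤ) - (j₂ : ℤ)| ∧
      (|(j₁ : ℤ) - (j₂ : ℤ)| = 1 → |(f₁ : ℤ) - (f₂ : ℤ)| = 1) := by
  wlog hj : j₁ ≤ j₂ generalizing j₁ j₂ f₁ f₂
  · rw [abs_sub_comm (f₁ : ℤ), abs_sub_comm (j₁ : ℤ)]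
    exact this j₂ j₁ f₂ f₁ hf₂ hf₁ (by omega)
  have hgap : f₁ + (i + j₂) ≤ f₂ + (i + j₁) :=
    hf₁.add_diag_le_add_diag hT hf₂ le_rfl (by omega)
  rw [abs_sub_comm (f₁ : ℤ), abs_sub_comm (j₁ : ℤ), abs_of_nonneg (by omega),
    abs_of_nonneg (by omega)]
  refine ⟨by omega, fun hadj => ?_⟩
  obtain rfl : j₂ = j₁ + 1 := by omega
  have := hf₁.eq_succ_of_above hT hf₂
  omega

/-- If two cells in the same tower of a tower diagram have
flight numbers `f₁`, `f₂`, then `|f₁ - f₂| ≥ |j₁ - j₂|`; moreover if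
`|j₁ - j₂| = 1` then `|f₁ - f₂| = 1`. -/
theorem flightNumber_distance_in_tower
    (T : Finset Cell) (hT : IsTowerDiagram T)
    (i j₁ j₂ f₁ f₂ : ℕ)
    (h₁ : ((i, j₁) : Cell) ∈ T) (h₂ : ((i, j₂) : Cell) ∈ T)
    (hf₁ : FlightNumber T (i, j₁) f₁) (hf₂ : FlightNumber T (i, j₂) f₂) :
    |(f₁ : ℤ) - (f₂ : ℤ)| ≥ |(j₁ : ℤ) - (j₂ : ℤ)| ∧
      (|(j₁ : ℤ) - (j₂ : ℤ)| = 1 → |(f₁ : ℤ) - (f₂ : ℤ)| = 1) :=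
  flightNumber_distance_in_tower_general T hT i j₁ j₂ f₁ f₂ hf₁ hf₂
end

section
/- Let T be a tower diagram and let α be a positive integer such that the slide α^↘T does not terminate, so that α^↘T = T ∪ {d} for a single new cell d. Then d is a corner cell of the diagram α^↘T and flight#(d, α^↘T) = α. -/
/-!
When a slide of `α` passes the cell `c` on the diagonal `α` because the cell above `c` is
occupied, it restarts as a slide of `α + 1` at the leftmost tower right of `c` that meets the
diagonal `α`. So `c` is the closest cell on that diagonal to the left of the restart cell, and
going back from the restart cell to `c` is a zigzag step of a flight path. Hence the new cell
flies back along the slide to the cell on the diagonal `α` where the slide started; that cell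
has a direct flight and is the lexicographically least cell of the path, so the flight
number is `α`.
-/

lemma Finset.eq_of_insert_eq_insert_of_notMem {ι : Type*} [DecidableEq ι] {s : Finset ι}
    {a b : ι} (hb : b ∉ s) (h : insert a s = insert b s) : b = a :=
  Finset.eq_of_mem_insert_of_notMem (h ▸ Finset.mem_insert_self b s) hb

lemma IsTowerDiagram.notMem_above {T : Finset Cell} (hT : IsTowerDiagram T) {c : Cell}
    (hc : c ∉ T) : (c.1, c.2 + 1) ∉ T :=
  fun h => hc ((hT _ h).2 c.2 (Nat.le_succ _))

/-- `e` is the cell where a slide of `α` into the towers of `S` in columns `≥ lo` starts. -/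
def IsSlideBase (S : Finset Cell) (lo α : ℕ) (e : Cell) : Prop :=
  e ∈ S ∧ e.1 + e.2 = α ∧ lo ≤ e.1 ∧ ∀ c ∈ S, lo ≤ c.1 → c.1 < e.1 → c.1 + c.2 + 1 ≠ α

def FliesTo (S : Finset Cell) (d e : Cell) (P : Finset Cell) : Prop :=
  ∀ Q, FlightPath S e Q → FlightPath S d (P ∪ Q)

def HasSlideFlight (S : Finset Cell) (lo α : ℕ) (d : Cell) : Prop :=
  lo ≤ d.1 ∧ ∃ e P, IsSlideBase S lo α e ∧ (∀ p ∈ P, toLex e < toLex p) ∧ FliesTo S d e P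

lemma FlightPath.single_of_isSlideBase {S : Finset Cell} {α : ℕ} {e : Cell}
    (he : IsSlideBase S 0 α e) : FlightPath S e {e} := by
  obtain ⟨hmem, hdiag, -, hleft⟩ := he
  refine FlightPath.direct e.1 e.2 hmem fun c hc ⟨hlt, hcdiag⟩ => ?_
  exact hleft c hc (Nat.zero_le _) hlt (hcdiag.trans hdiag)

lemma fliesTo_self (S : Finset Cell) (d : Cell) : FliesTo S d d ∅ := by
  simp [FliesTo]

lemma FliesTo.trans {S P P' : Finset Cell} {d e f : Cell} (hde : FliesTo S d e P)
    (hef : FliesTo S e f P') : FliesTo S d f (P ∪ P') := fun Q hQ => by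
  rw [Finset.union_assoc]
  exact hde _ (hef Q hQ)

lemma fliesTo_zigzag {S : Finset Cell} {i j i' j' : ℕ} (hmem : (i, j) ∈ S)
    (hmem' : (i', j') ∈ S) (hleft : i' < i) (hdiag : i' + j' + 1 = i + j)
    (hclosest : ∀ c ∈ S, c.1 < i → c.1 + c.2 + 1 = i + j → c.1 ≤ i')
    (hup : (i', j' + 1) ∈ S) : FliesTo S (i, j) (i', j') {(i, j), (i', j' + 1)} :=
  fun Q hQ => by
    simpa using FlightPath.zigzag i j i' j' Q hmem hmem' hleft hdiag hclosest hup hQ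

lemma IsSlideBase.hasSlideFlight {S : Finset Cell} {lo α : ℕ} {d : Cell}
    (hd : IsSlideBase S lo α d) : HasSlideFlight S lo α d :=
  ⟨hd.2.2.1, d, ∅, hd, by simp, fliesTo_self S d⟩

/-- `(x, y)` is the closest cell on the diagonal `α` to the left of the base of `α + 1`,
since no tower strictly between them meets that diagonal. -/
lemma HasSlideFlight.zigzag {S : Finset Cell} {lo α x y : ℕ} {d : Cell}
    (hflight : HasSlideFlight S (x + 1) (α + 1) d) (hmem : (x, y) ∈ S)
    (hup : (x, y + 1) ∈ S) (hdiag : x + y = α) (hlo : lo ≤ x)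
    (hleft : ∀ c ∈ S, lo ≤ c.1 → c.1 < x → c.1 + c.2 + 1 ≠ α) :
    HasSlideFlight S lo α d := by
  obtain ⟨hdcol, ⟨a, b⟩, P, ⟨he, hediag, hecol, heleft⟩, hlex, hfly⟩ := hflight
  have hstep : FliesTo S (a, b) (x, y) {(a, b), (x, y + 1)} := by
    refine fliesTo_zigzag he hmem hecol (by omega) (fun c hc hca hcdiag => ?_) hup
    by_contra! hcx
    exact heleft c hc hcx hca (by omega)
  have hbase_lt : toLex (x, y) < toLex (a, b) := Prod.Lex.toLex_lt_toLex.2 (Or.inl hecol)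
  refine ⟨by omega, (x, y), P ∪ {(a, b), (x, y + 1)}, ⟨hmem, hdiag, hlo, hleft⟩, ?_,
    hfly.trans hstep⟩
  simp only [Finset.mem_union, Finset.mem_insert, Finset.mem_singleton]
  rintro p (hp | rfl | rfl)
  · exact hbase_lt.trans (hlex p hp)
  · exact hbase_lt
  · exact Prod.Lex.toLex_lt_toLex.2 (Or.inr ⟨rfl, Nat.lt_succ_self y⟩)

theorem SlideAux.hasSlideFlight {T T' : Finset Cell} {lo α : ℕ} {d : Cell}
    (h : SlideAux T lo α T') (hlo : lo ≤ α) (hd : d ∉ T) (hT' : T' = insert d T) :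
    HasSlideFlight T' lo α d := by
  induction h with
  | s1a lo α h1 _ =>
    obtain rfl := Finset.eq_of_insert_eq_insert_of_notMem hd hT'
    refine IsSlideBase.hasSlideFlight ⟨Finset.mem_insert_self _ _, rfl, hlo, ?_⟩
    simp only [Finset.forall_mem_insert]
    exact ⟨fun _ hlt => absurd hlt (lt_irrefl _), fun c hc hcol _ => h1 c hc hcol⟩
  | s2a lo α i j _ hcol hdiag hmin _ =>
    obtain rfl := Finset.eq_of_insert_eq_insert_of_notMem hd hT'
    refine IsSlideBase.hasSlideFlight ⟨Finset.mem_insert_self _ _, (by dsimp only; omega), hcol, ?_⟩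
    simp only [Finset.forall_mem_insert]
    exact ⟨fun _ hlt => absurd hlt (lt_irrefl _),
      fun c hc hccol hlt hcdiag => absurd (hmin c hc hccol hcdiag) (not_le.2 hlt)⟩
  | s1c lo α T' h1 h2 h2' h3 _ ih =>
    have hflight := ih le_rfl hT'
    subst hT'
    refine hflight.zigzag (y := 0) (Finset.mem_insert_of_mem h2) (Finset.mem_insert_of_mem h3)
      rfl h2' ?_
    simp only [Finset.forall_mem_insert]
    exact ⟨fun _ hlt => absurd hflight.1 (by omega), fun c hc hcol _ => h1 c hc hcol⟩
  | s2c lo α i j T' _ hcol hdiag hmin h1 h2 _ ih =>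
    have hflight := ih (by omega) hT'
    subst hT'
    refine hflight.zigzag (y := j + 1) (Finset.mem_insert_of_mem h1)
      (Finset.mem_insert_of_mem h2) (by omega) hcol ?_
    simp only [Finset.forall_mem_insert]
    exact ⟨fun _ hlt => absurd hflight.1 (by omega),
      fun c hc hccol hlt hcdiag => absurd (hmin c hc hccol hcdiag) (by omega)⟩

theorem slide_new_cell_is_corner_with_flightNumber_general
    (T : Finset Cell) (hT : IsTowerDiagram T)
    (α : ℕ)
    (d : Cell) (hd : d ∉ T)
    (hslide : Slides T α (insert d T)) :
    IsCornerCell (insert d T) d ∧ FlightNumber (insert d T) d α := by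
  obtain ⟨-, e, P, hbase, hlex, hfly⟩ := SlideAux.hasSlideFlight hslide (Nat.zero_le α) hd rfl
  have hpath : FlightPath (insert d T) d (P ∪ {e}) :=
    hfly _ (FlightPath.single_of_isSlideBase hbase)
  have htop : (d.1, d.2 + 1) ∉ insert d T := by
    simpa [Prod.ext_iff] using hT.notMem_above hd
  refine ⟨⟨Finset.mem_insert_self d T, htop, _, hpath⟩, _, hpath, e, by simp, hbase.2.1, ?_⟩
  simp only [Finset.mem_union, Finset.mem_singleton]
  rintro p (hp | rfl)
  · exact Prod.Lex.toLex_le_toLex.1 (hlex p hp).le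
  · exact Or.inr ⟨rfl, le_rfl⟩

/-- If the slide of `α` into `T` does not terminate, producing
the single new cell `d`, then `d` is a corner cell of `α ↘ T` and its flight
number in `α ↘ T` is `α`. -/
theorem slide_new_cell_is_corner_with_flightNumber
    (T : Finset Cell) (hT : IsTowerDiagram T)
    (α : ℕ) (hα : 1 ≤ α)
    (d : Cell) (hd : d ∉ T)
    (hslide : Slides T α (insert d T)) :
    IsCornerCell (insert d T) d ∧ FlightNumber (insert d T) d α :=
  slide_new_cell_is_corner_with_flightNumber_general T hT α d hd hslide
end

section
/- Let T be a tower diagram and let α and β be positive integers with |β − α| ≥ 2. Then either both iterated slides α^↘(β^↘T) and β^↘(α^↘T) are defined and α^↘(β^↘T) = β^↘(α^↘T), or both iterated slides terminate without result. -/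
/-! A slide is a run through states `(lo, v)` (slide `v` into the towers in columns `≥ lo`);
each step inspects only two cells of its pivot column `p` and moves on to `(p + 1, v + 1)`.

Let `α + 2 ≤ β`. When the `α`-run recurses at value `v` through its pivot `p`, the cell
`(p, v - p + 1)` lies on the diagonal that the `β`-run scans at value `v + 2`, so the `β`-pivot at
value `v + 2` is weakly left of the `α`-pivot at value `v`. Consequently the cell added by the
`β`-slide is already left of the `α`-run when the values of the `α`-run come near its coordinate
sum, and the cell added by the `α`-slide stays right of the `β`-pivot while the values of the
`β`-run are near its sum. So neither run ever inspects the cell the other slide adds, and each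
run, successful or not, is the same on `T` and on `T` with that cell. -/

section Slides

variable {T : Finset Cell} {c : Cell} {lo v p : ℕ} {o : Option Cell}

/-- The leftmost column `p ≥ lo` holding a cell on the diagonal `x + y = v - 1`, or `p = v` if
there is none. A slide step at state `(lo, v)` inspects only `(p, v - p)` and `(p, v - p + 1)`. -/
structure IsPivot (T : Finset Cell) (lo v p : ℕ) : Prop where
  lo_le : lo ≤ p
  le_val : p ≤ v
  mem_diag : p < v → (p, v - p - 1) ∈ T
  le_col : ∀ d ∈ T, lo ≤ d.1 → d.1 + d.2 + 1 = v → p ≤ d.1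

theorem IsPivot.le_of_isPivot {q : ℕ} (hp : IsPivot T lo v p) (hq : IsPivot T lo v q) :
    p ≤ q := by
  rcases hq.le_val.lt_or_eq with hqv | rfl
  · exact hp.le_col _ (hq.mem_diag hqv) hq.lo_le (by simp only; omega)
  · exact hp.le_val

theorem IsPivot.unique {q : ℕ} (hp : IsPivot T lo v p) (hq : IsPivot T lo v q) : p = q :=
  le_antisymm (hp.le_of_isPivot hq) (hq.le_of_isPivot hp)

theorem IsPivot.of_forall_ne (hlo : lo ≤ v) (h : ∀ d ∈ T, lo ≤ d.1 → d.1 + d.2 + 1 ≠ v) :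
    IsPivot T lo v v :=
  ⟨hlo, le_rfl, fun h => absurd h (lt_irrefl v), fun d hd hlo hd' => absurd hd' (h d hd hlo)⟩

theorem IsPivot.forall_ne (hp : IsPivot T lo v v) : ∀ d ∈ T, lo ≤ d.1 → d.1 + d.2 + 1 ≠ v :=
  fun d hd hlo hd' => by have := hp.le_col d hd hlo hd'; omega

theorem IsPivot.of_mem {i j : ℕ} (hmem : (i, j) ∈ T) (hlo : lo ≤ i) (hdiag : i + j + 1 = v)
    (hmin : ∀ d ∈ T, lo ≤ d.1 → d.1 + d.2 + 1 = v → i ≤ d.1) : IsPivot T lo v i :=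
  ⟨hlo, by omega, fun _ => by rwa [show v - i - 1 = j by omega], hmin⟩

theorem exists_isPivot (hlo : lo ≤ v) : ∃ p, IsPivot T lo v p := by
  by_cases h : ∃ d ∈ T, lo ≤ d.1 ∧ d.1 + d.2 + 1 = v
  · obtain ⟨d, hd, hmin⟩ := Finset.exists_min_image
      (T.filter fun d => lo ≤ d.1 ∧ d.1 + d.2 + 1 = v) Prod.fst
      (let ⟨d, hd, hlo, hdv⟩ := h; ⟨d, Finset.mem_filter.mpr ⟨hd, hlo, hdv⟩⟩)
    obtain ⟨hdT, hdlo, hdv⟩ := Finset.mem_filter.mp hd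
    exact ⟨d.1, .of_mem hdT hdlo hdv fun e he hlo he' =>
      hmin e (Finset.mem_filter.mpr ⟨he, hlo, he'⟩)⟩
  · exact ⟨v, .of_forall_ne hlo fun d hd hlo hdv => h ⟨d, hd, hlo, hdv⟩⟩

/-- `SlideOutcome T lo v o`: sliding `v` into the towers of `T` in columns `≥ lo` adds the
cell `c` if `o = some c`, and terminates without result if `o = none`. -/
inductive SlideOutcome (T : Finset Cell) : ℕ → ℕ → Option Cell → Prop
  | ground (lo v : ℕ) (hp : IsPivot T lo v v) (hv : ∀ d ∈ T, lo ≤ d.1 → d.1 + d.2 ≠ v) :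
      SlideOutcome T lo v (some (v, 0))
  | top (lo v p : ℕ) (hp : IsPivot T lo v p) (hpv : p < v) (hfree : (p, v - p) ∉ T) :
      SlideOutcome T lo v (some (p, v - p))
  | stuck (lo v p : ℕ) (hp : IsPivot T lo v p) (hmem : (p, v - p) ∈ T)
      (hfree : (p, v - p + 1) ∉ T) : SlideOutcome T lo v none
  | next (lo v p : ℕ) {o : Option Cell} (hp : IsPivot T lo v p) (hmem : (p, v - p) ∈ T)
      (hmem' : (p, v - p + 1) ∈ T) (hrec : SlideOutcome T (p + 1) (v + 1) o) :
      SlideOutcome T lo v o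

theorem SlideOutcome.le_of_mem (h : SlideOutcome T lo v o) :
    ∀ c ∈ o, lo ≤ c.1 ∧ v ≤ c.1 + c.2 := by
  induction h with
  | ground lo v hp => simpa using hp.lo_le
  | top lo v p hp => simpa using ⟨hp.lo_le, by have := hp.le_val; omega⟩
  | stuck => simp
  | next lo v p hp _ _ _ ih =>
    intro c hc
    have := ih c hc
    have := hp.lo_le
    omega

theorem SlideOutcome.eq_of_isPivot (h : SlideOutcome T lo v o) (hp : IsPivot T lo v p) :
    (p, v - p) ∉ T ∧ o = some (p, v - p) ∨
      (p, v - p) ∈ T ∧ (p, v - p + 1) ∉ T ∧ o = none ∨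
      (p, v - p) ∈ T ∧ (p, v - p + 1) ∈ T ∧ SlideOutcome T (p + 1) (v + 1) o := by
  cases h with
  | ground _ _ hq hv =>
    obtain rfl := hp.unique hq
    exact Or.inl ⟨fun h => hv _ h hp.lo_le (by simp), by simp⟩
  | top _ _ q hq _ hfree =>
    obtain rfl := hp.unique hq
    exact Or.inl ⟨hfree, rfl⟩
  | stuck _ _ q hq hmem hfree =>
    obtain rfl := hp.unique hq
    exact Or.inr (Or.inl ⟨hmem, hfree, rfl⟩)
  | next _ _ q hq hmem hmem' hrec =>
    obtain rfl := hp.unique hq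
    exact Or.inr (Or.inr ⟨hmem, hmem', hrec⟩)

theorem SlideOutcome.unique {o' : Option Cell} (h : SlideOutcome T lo v o)
    (h' : SlideOutcome T lo v o') : o = o' := by
  induction h generalizing o' with
  | ground lo v hp hv =>
    rcases h'.eq_of_isPivot hp with ⟨-, rfl⟩ | ⟨hmem, -⟩ | ⟨hmem, -⟩
    · simp
    all_goals exact absurd (by simp) (hv _ hmem hp.lo_le)
  | top lo v p hp _ hfree =>
    rcases h'.eq_of_isPivot hp with ⟨-, rfl⟩ | ⟨hmem, -⟩ | ⟨hmem, -⟩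
    · rfl
    all_goals exact absurd hmem hfree
  | stuck lo v p hp hmem hfree =>
    rcases h'.eq_of_isPivot hp with ⟨hfree', -⟩ | ⟨-, -, rfl⟩ | ⟨-, hmem', -⟩
    · exact absurd hmem hfree'
    · rfl
    · exact absurd hmem' hfree
  | next lo v p hp hmem hmem' _ ih =>
    rcases h'.eq_of_isPivot hp with ⟨hfree, -⟩ | ⟨-, hfree, -⟩ | ⟨-, -, hrec⟩
    · exact absurd hmem hfree
    · exact absurd hmem' hfree
    · exact ih hrec

theorem SlideAux.exists_slideOutcome {T' : Finset Cell} (h : SlideAux T lo v T') (hlo : lo ≤ v) :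
    ∃ c, SlideOutcome T lo v (some c) ∧ T' = insert c T := by
  induction h with
  | s1a lo v h1 h2 => exact ⟨_, .ground lo v (.of_forall_ne hlo h1) h2, rfl⟩
  | s1c lo v T' h1 h2 _ h3 _ ih =>
    obtain ⟨c, hc, rfl⟩ := ih le_rfl
    exact ⟨c, .next lo v v (.of_forall_ne hlo h1) (by simpa using h2) (by simpa using h3) hc, rfl⟩
  | s2a lo v i j hmem hlo' hdiag hmin htop =>
    have hv : v - i = j + 1 := by omega
    refine ⟨(i, v - i), .top lo v i (.of_mem hmem hlo' hdiag hmin) (by omega) ?_, by rw [hv]⟩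
    rwa [hv]
  | s2c lo v i j T' hmem hlo' hdiag hmin h1 h2 _ ih =>
    obtain ⟨c, hc, rfl⟩ := ih (by omega)
    have hv : v - i = j + 1 := by omega
    exact ⟨c, .next lo v i (.of_mem hmem hlo' hdiag hmin) (by rwa [hv]) (by rwa [hv]) hc, rfl⟩

theorem SlideOutcome.slideAux (h : SlideOutcome T lo v o) :
    ∀ c ∈ o, SlideAux T lo v (insert c T) := by
  induction h with
  | ground lo v hp hv =>
    rintro c ⟨⟩
    exact .s1a lo v hp.forall_ne hv
  | top lo v p hp hpv hfree =>
    rintro c ⟨⟩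
    have hv : v - p = v - p - 1 + 1 := by omega
    rw [hv] at hfree ⊢
    exact .s2a lo v p _ (hp.mem_diag hpv) hp.lo_le (by omega) hp.le_col hfree
  | stuck => rintro c ⟨⟩
  | next lo v p hp hmem hmem' _ ih =>
    intro c hc
    rcases hp.le_val.lt_or_eq with hpv | rfl
    · have hv : v - p = v - p - 1 + 1 := by omega
      rw [hv] at hmem hmem'
      exact .s2c lo v p _ _ (hp.mem_diag hpv) hp.lo_le (by omega) hp.le_col hmem hmem' (ih c hc)
    · simp only [Nat.sub_self, zero_add] at hmem hmem'
      exact .s1c lo p _ hp.forall_ne hmem hp.lo_le hmem' (ih c hc)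

theorem slideAux_iff {T' : Finset Cell} (hlo : lo ≤ v) :
    SlideAux T lo v T' ↔ ∃ c, SlideOutcome T lo v (some c) ∧ T' = insert c T :=
  ⟨fun h => h.exists_slideOutcome hlo, fun ⟨c, hc, hT'⟩ => hT' ▸ hc.slideAux c rfl⟩

theorem slides_iff_of_slideOutcome {T' : Finset Cell} (h : SlideOutcome T 0 v o) :
    Slides T v T' ↔ ∃ c ∈ o, T' = insert c T := by
  rw [Slides, slideAux_iff (Nat.zero_le v)]
  constructor
  · rintro ⟨c, hc, rfl⟩
    exact ⟨c, h.unique hc, rfl⟩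
  · rintro ⟨c, rfl, rfl⟩
    exact ⟨c, h, rfl⟩

theorem IsPivot.forall_sum_ne (hT : IsTowerDiagram T) (hp : IsPivot T lo v v) (h0 : (v, 0) ∉ T) :
    ∀ d ∈ T, lo ≤ d.1 → d.1 + d.2 ≠ v := by
  rintro ⟨i, j⟩ hd hlo rfl
  cases j with
  | zero => exact h0 hd
  | succ j => exact hp.forall_ne (i, j) ((hT _ hd).2 j (Nat.le_succ j)) hlo rfl

theorem exists_slideOutcome (hT : IsTowerDiagram T) {lo v : ℕ} (hlo : lo ≤ v) :
    ∃ o, SlideOutcome T lo v o := by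
  obtain ⟨p, hp⟩ := exists_isPivot (T := T) hlo
  by_cases h0 : (p, v - p) ∈ T
  · by_cases h1 : (p, v - p + 1) ∈ T
    · -- the termination measure decreases along the recursive call
      have hbound : v + 1 ≤ T.sup fun c => c.1 + c.2 := by
        have := Finset.le_sup (f := fun c : Cell => c.1 + c.2) h1
        have := hp.le_val
        omega
      obtain ⟨o, ho⟩ := exists_slideOutcome hT (lo := p + 1) (v := v + 1)
        (by have := hp.le_val; omega)
      exact ⟨o, .next lo v p hp h0 h1 ho⟩
    · exact ⟨none, .stuck lo v p hp h0 h1⟩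
  · rcases hp.le_val.lt_or_eq with hpv | rfl
    · exact ⟨_, .top lo v p hp hpv h0⟩
    · exact ⟨_, .ground lo p hp (hp.forall_sum_ne hT (by simpa using h0))⟩
termination_by (T.sup fun c => c.1 + c.2) + 2 - v

/-- The cell `c` cannot influence the slide step at state `(lo, v)` of `T`; in the last case the
pivot is left of `c`. -/
def IrrelevantAt (T : Finset Cell) (c : Cell) (lo v : ℕ) : Prop :=
  c.1 < lo ∨ c.1 + c.2 + 2 ≤ v ∨ v + 2 ≤ c.1 + c.2 ∨
    ∃ d ∈ T, lo ≤ d.1 ∧ d.1 < c.1 ∧ d.1 + d.2 + 1 = v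

theorem IsPivot.insert_irrelevant (hp : IsPivot T lo v p) (hc : IrrelevantAt T c lo v) :
    IsPivot (insert c T) lo v p := by
  refine ⟨hp.lo_le, hp.le_val, fun h => Finset.mem_insert_of_mem (hp.mem_diag h), ?_⟩
  intro d hd hlo hdv
  rcases Finset.mem_insert.mp hd with rfl | hd
  · rcases hc with hc | hc | hc | ⟨e, he, helo, hec, hev⟩
    · omega
    · omega
    · omega
    · exact (hp.le_col e he helo hev).trans hec.le
  · exact hp.le_col d hd hlo hdv

theorem IsPivot.mem_insert_iff {k : ℕ} (hp : IsPivot T lo v p) (hc : IrrelevantAt T c lo v)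
    (hk : v ≤ p + k) (hk' : p + k ≤ v + 1) : (p, k) ∈ insert c T ↔ (p, k) ∈ T := by
  refine ⟨fun h => (Finset.mem_insert.mp h).resolve_left ?_, Finset.mem_insert_of_mem⟩
  rintro rfl
  rcases hc with hc | hc | hc | ⟨e, he, helo, hec, hev⟩
  · exact absurd hp.lo_le (by simp only at hc; omega)
  · simp only at hc; omega
  · simp only at hc; omega
  · exact absurd (hp.le_col e he helo hev) (by simp only at hec; omega)

theorem IsPivot.forall_sum_ne_insert (hp : IsPivot T lo v v) (hc : IrrelevantAt T c lo v)
    (hv : ∀ d ∈ T, lo ≤ d.1 → d.1 + d.2 ≠ v) : ∀ d ∈ insert c T, lo ≤ d.1 → d.1 + d.2 ≠ v := by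
  intro d hd hlo hdv
  rcases Finset.mem_insert.mp hd with rfl | hd
  · rcases hc with hc | hc | hc | ⟨e, he, helo, -, hev⟩
    · omega
    · omega
    · omega
    · exact hp.forall_ne e he helo hev
  · exact hv d hd hlo hdv

theorem SlideOutcome.insert_of_invariant (I : ℕ → ℕ → Prop)
    (hirr : ∀ lo v, I lo v → IrrelevantAt T c lo v)
    (hstep : ∀ lo v p, I lo v → IsPivot T lo v p → (p, v - p + 1) ∈ T → I (p + 1) (v + 1))
    (h : SlideOutcome T lo v o) (hI : I lo v) : SlideOutcome (insert c T) lo v o := by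
  induction h with
  | ground lo v hp hv =>
    exact .ground lo v (hp.insert_irrelevant (hirr _ _ hI))
      (hp.forall_sum_ne_insert (hirr _ _ hI) hv)
  | top lo v p hp hpv hfree =>
    have := hp.le_val
    refine .top lo v p (hp.insert_irrelevant (hirr _ _ hI)) hpv ?_
    rwa [hp.mem_insert_iff (hirr _ _ hI) (by omega) (by omega)]
  | stuck lo v p hp hmem hfree =>
    have := hp.le_val
    refine .stuck lo v p (hp.insert_irrelevant (hirr _ _ hI)) (Finset.mem_insert_of_mem hmem) ?_
    rwa [hp.mem_insert_iff (hirr _ _ hI) (by omega) (by omega)]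
  | next lo v p hp hmem hmem' _ ih =>
    exact .next lo v p (hp.insert_irrelevant (hirr _ _ hI)) (Finset.mem_insert_of_mem hmem)
      (Finset.mem_insert_of_mem hmem') (ih (hstep lo v p hI hp hmem'))

theorem SlideOutcome.col_le_or_next {w k : ℕ} (h : SlideOutcome T lo w (some c))
    (hd : (p, k) ∈ T) (hlo : lo ≤ p) (hdiag : p + k + 1 = w) :
    c.1 ≤ p ∨ ∃ q ≤ p, SlideOutcome T (q + 1) (w + 1) (some c) := by
  cases h with
  | ground _ _ hq => exact absurd (hq.le_col _ hd hlo hdiag) (by simp only; omega)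
  | top _ _ q hq => exact Or.inl (hq.le_col _ hd hlo hdiag)
  | next _ _ q hq _ _ hrec => exact Or.inr ⟨q, hq.le_col _ hd hlo hdiag, hrec⟩

theorem SlideOutcome.sum_eq_or_next {w : ℕ} (h : SlideOutcome T lo w (some c)) :
    c.1 + c.2 = w ∨ ∃ p k, lo ≤ p ∧ p < c.1 ∧ p + k = w + 1 ∧ (p, k) ∈ T ∧
      SlideOutcome T (p + 1) (w + 1) (some c) := by
  cases h with
  | ground => exact Or.inl rfl
  | top _ _ q hq hqv => exact Or.inl (by simp only; omega)
  | next _ _ q hq _ hmem' hrec =>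
    have := hq.le_val
    exact Or.inr ⟨q, w - q + 1, hq.lo_le, (hrec.le_of_mem c rfl).1, by omega, hmem', hrec⟩

theorem SlideOutcome.exists_of_le {w w' : ℕ} (h : SlideOutcome T lo w (some c)) (hw : w ≤ w')
    (hw' : w' ≤ c.1 + c.2) : ∃ lo', SlideOutcome T lo' w' (some c) := by
  obtain ⟨k, rfl⟩ := Nat.exists_eq_add_of_le hw
  induction k generalizing lo w with
  | zero => exact ⟨lo, h⟩
  | succ k ih =>
    rcases h.sum_eq_or_next with hs | ⟨p, -, -, -, -, -, hnext⟩
    · omega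
    · rw [← add_assoc, Nat.add_right_comm]
      exact ih hnext (by omega) (by omega)

variable {α β : ℕ}

theorem SlideOutcome.insert_of_higher (hαβ : α + 2 ≤ β) (hβ : SlideOutcome T 0 β (some c))
    (hα : SlideOutcome T 0 α o) : SlideOutcome (insert c T) 0 α o := by
  refine hα.insert_of_invariant
    (fun lo v => c.1 < lo ∨ ∃ lo' ≤ lo, ∃ w, v + 2 ≤ w ∧ SlideOutcome T lo' w (some c))
    ?_ ?_ (Or.inr ⟨0, le_rfl, β, hαβ, hβ⟩)
  · rintro lo v (h | ⟨lo', -, w, hw, hout⟩)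
    · exact Or.inl h
    · exact Or.inr (Or.inr (Or.inl (hw.trans (hout.le_of_mem c rfl).2)))
  · rintro lo v p (h | ⟨lo', hlo', w, hw, hout⟩) hp hmem
    · exact Or.inl (by have := hp.lo_le; omega)
    have := hp.lo_le
    rcases hw.lt_or_eq with hw | rfl
    · exact Or.inr ⟨lo', by omega, w, by omega, hout⟩
    -- the pivot tower of the lower run meets the diagonal scanned by the higher run
    rcases hout.col_le_or_next hmem (by omega) (by have := hp.le_val; omega) with h | ⟨q, hq, hnext⟩
    · exact Or.inl (by omega)
    · exact Or.inr ⟨q + 1, by omega, _, le_rfl, hnext⟩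

theorem SlideOutcome.insert_of_lower (hαβ : α + 2 ≤ β) (hα : SlideOutcome T 0 α (some c))
    (hβ : SlideOutcome T 0 β o) : SlideOutcome (insert c T) 0 β o := by
  refine hβ.insert_of_invariant (fun lo v => c.1 < lo ∨ c.1 + c.2 + 2 ≤ v ∨
      ∃ lo' ≥ lo, ∃ w, w + 2 = v ∧ SlideOutcome T lo' w (some c)) ?_ ?_ ?_
  · rintro lo v (h | h | ⟨lo', hlo', w, rfl, hout⟩)
    · exact Or.inl h
    · exact Or.inr (Or.inl h)
    rcases hout.sum_eq_or_next with hs | ⟨p, k, hp, hpc, hpk, hmem, -⟩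
    · exact Or.inr (Or.inl (by omega))
    · exact Or.inr (Or.inr (Or.inr ⟨(p, k), hmem, by simp only; omega, hpc, by simp only; omega⟩))
  · rintro lo v q (h | h | ⟨lo', hlo', w, rfl, hout⟩) hq -
    · exact Or.inl (by have := hq.lo_le; omega)
    · exact Or.inr (Or.inl (by omega))
    rcases hout.sum_eq_or_next with hs | ⟨p, k, hp, -, hpk, hmem, hnext⟩
    · exact Or.inr (Or.inl (by omega))
    · have := hq.le_col _ hmem (by simp only; omega) (by simp only; omega)
      exact Or.inr (Or.inr ⟨p + 1, by simp only at this; omega, w + 1, by omega, hnext⟩)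
  · by_cases hfar : c.1 + c.2 + 2 ≤ β
    · exact Or.inr (Or.inl hfar)
    · obtain ⟨lo', hlo'⟩ := hα.exists_of_le (w' := β - 2) (by omega) (by omega)
      exact Or.inr (Or.inr ⟨lo', Nat.zero_le _, β - 2, by omega, hlo'⟩)

theorem exists_slides_slides_iff {U : Finset Cell} {oα oβ : Option Cell}
    (hβ : SlideOutcome T 0 β oβ) (hα : ∀ c ∈ oβ, SlideOutcome (insert c T) 0 α oα) :
    (∃ V, Slides T β V ∧ Slides V α U) ↔ ∃ cβ ∈ oβ, ∃ cα ∈ oα, U = insert cα (insert cβ T) := by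
  constructor
  · rintro ⟨V, hV, hU⟩
    obtain ⟨cβ, hcβ, rfl⟩ := (slides_iff_of_slideOutcome hβ).1 hV
    obtain ⟨cα, hcα, rfl⟩ := (slides_iff_of_slideOutcome (hα cβ hcβ)).1 hU
    exact ⟨cβ, hcβ, cα, hcα, rfl⟩
  · rintro ⟨cβ, hcβ, cα, hcα, rfl⟩
    exact ⟨_, (slides_iff_of_slideOutcome hβ).2 ⟨cβ, hcβ, rfl⟩,
      (slides_iff_of_slideOutcome (hα cβ hcβ)).2 ⟨cα, hcα, rfl⟩⟩

theorem slides_commute_of_add_two_le (hT : IsTowerDiagram T) (hαβ : α + 2 ≤ β) :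
    (∃ U : Finset Cell,
        (∃ V, Slides T β V ∧ Slides V α U) ∧ (∃ W, Slides T α W ∧ Slides W β U)) ∨
      ((¬ ∃ U V, Slides T β V ∧ Slides V α U) ∧
        (¬ ∃ U W, Slides T α W ∧ Slides W β U)) := by
  obtain ⟨oα, hα⟩ := exists_slideOutcome hT (Nat.zero_le α)
  obtain ⟨oβ, hβ⟩ := exists_slideOutcome hT (Nat.zero_le β)
  simp only [exists_slides_slides_iff hβ fun c hc => (hc ▸ hβ).insert_of_higher hαβ hα,
    exists_slides_slides_iff hα fun c hc => (hc ▸ hα).insert_of_lower hαβ hβ]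
  rcases oα with _ | cα <;> rcases oβ with _ | cβ
  · simp
  · simp
  · simp
  · exact Or.inl ⟨_, ⟨cβ, rfl, cα, rfl, rfl⟩, cα, rfl, cβ, rfl, Finset.insert_comm _ _ _⟩

end Slides

theorem slides_far_commute_general
    (T : Finset Cell) (hT : IsTowerDiagram T)
    (α β : ℕ)
    (hfar : α + 2 ≤ β ∨ β + 2 ≤ α) :
    (∃ U : Finset Cell,
        (∃ V, Slides T β V ∧ Slides V α U) ∧ (∃ W, Slides T α W ∧ Slides W β U)) ∨
      ((¬ ∃ U V, Slides T β V ∧ Slides V α U) ∧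
        (¬ ∃ U W, Slides T α W ∧ Slides W β U)) := by
  rcases hfar with h | h
  · exact slides_commute_of_add_two_le hT h
  · rcases slides_commute_of_add_two_le hT h with ⟨U, h₁, h₂⟩ | ⟨h₁, h₂⟩
    · exact Or.inl ⟨U, h₂, h₁⟩
    · exact Or.inr ⟨h₂, h₁⟩

/-- For `|β - α| ≥ 2`, either both iterated slides
`α ↘ (β ↘ T)` and `β ↘ (α ↘ T)` are defined and equal, or both terminate
without result. -/
theorem slides_far_commute
    (T : Finset Cell) (hT : IsTowerDiagram T)
    (α β : ℕ) (hα : 1 ≤ α) (hβ : 1 ≤ β)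
    (hfar : α + 2 ≤ β ∨ β + 2 ≤ α) :
    (∃ U : Finset Cell,
        (∃ V, Slides T β V ∧ Slides V α U) ∧ (∃ W, Slides T α W ∧ Slides W β U)) ∨
      ((¬ ∃ U V, Slides T β V ∧ Slides V α U) ∧
        (¬ ∃ U W, Slides T α W ∧ Slides W β U)) :=
  slides_far_commute_general T hT α β hfar
end

section
/- Let T be a tower diagram and let α be a positive integer. Then either both iterated slides α^↘((α+1)^↘(α^↘T)) and (α+1)^↘(α^↘((α+1)^↘T)) are defined and α^↘((α+1)^↘(α^↘T)) = (α+1)^↘(α^↘((α+1)^↘T)), or both iterated slides terminate without result. -/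
/-!
A tower diagram is encoded by the list of its tower heights. Sliding `α` into the towers from
column `lo` on inspects the first tower, of height `x` say, and with `d = α - lo` either skips it
(`x < d`: it lies below the diagonal), puts the new cell on top of it (`x = d`), terminates
(`x = d + 1`), or hands the slide on to the next column with `α + 1` (`x ≥ d + 2`). On lists this
is the recursion `slide`, and the braid relation becomes an induction on the list: comparing the
first height with `d` either decides both iterated slides at once or leaves the first tower
untouched by all three slides on each side.
-/

namespace TowerDiagram

/-- `slide t d` slides into the towers of heights `t` (the list extended by empty towers), the
diagonal being `d` columns to the right of the first tower; `none` means the slide terminates. -/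
def slide : List ℕ → ℕ → Option (List ℕ)
  | [], 0 => some [1]
  | [], d + 1 => (slide [] d).map (0 :: ·)
  | x :: t, d =>
    if x < d then (slide t (d - 1)).map (x :: ·)
    else if x = d then some ((d + 1) :: t)
    else if x = d + 1 then none
    else (slide t d).map (x :: ·)

def SlideBraid (t : List ℕ) (d : ℕ) : Prop :=
  ((slide t d).bind (slide · (d + 1))).bind (slide · d) =
    ((slide t (d + 1)).bind (slide · d)).bind (slide · (d + 1))

theorem slide_nil (d : ℕ) : slide [] d = slide [0] d := by
  cases d <;> simp [slide]

theorem slide_cons_of_lt {x d : ℕ} (h : x < d) (t : List ℕ) :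
    slide (x :: t) d = (slide t (d - 1)).map (x :: ·) := by
  simp [slide, h]

theorem slide_cons_self (d : ℕ) (t : List ℕ) : slide (d :: t) d = some ((d + 1) :: t) := by
  simp [slide]

theorem slide_cons_succ (d : ℕ) (t : List ℕ) : slide ((d + 1) :: t) d = none := by
  simp [slide]

theorem slide_cons_of_add_two_le {x d : ℕ} (h : d + 2 ≤ x) (t : List ℕ) :
    slide (x :: t) d = (slide t d).map (x :: ·) := by
  simp [slide, show ¬ x < d by omega, show x ≠ d by omega, show x ≠ d + 1 by omega]

theorem SlideBraid.cons {x d d' : ℕ} {t : List ℕ}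
    (h₀ : ∀ u, slide (x :: u) d = (slide u d').map (x :: ·))
    (h₁ : ∀ u, slide (x :: u) (d + 1) = (slide u (d' + 1)).map (x :: ·))
    (h : SlideBraid t d') : SlideBraid (x :: t) d := by
  unfold SlideBraid at *
  calc _ = ((((slide t d').bind (slide · (d' + 1))).bind (slide · d')).map (x :: ·)) := by
          simp [h₀, h₁, Option.bind_map, Option.map_bind, Option.bind_assoc]
    _ = _ := by
          rw [h]
          simp [h₀, h₁, Option.bind_map, Option.map_bind, Option.bind_assoc]

theorem slideBraid_nil_iff (d : ℕ) : SlideBraid [] d ↔ SlideBraid [0] d := by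
  simp only [SlideBraid, slide_nil]

theorem slideBraid_cons_self (d : ℕ) (t : List ℕ) : SlideBraid (d :: t) d := by
  unfold SlideBraid
  rw [slide_cons_self, slide_cons_of_lt (Nat.lt_succ_self d)]
  simp [slide_cons_self, slide_cons_of_add_two_le, Option.bind_assoc,
    Option.map_eq_bind]

theorem slideBraid_cons_succ (d : ℕ) (t : List ℕ) : SlideBraid ((d + 1) :: t) d := by
  unfold SlideBraid
  rw [slide_cons_succ, slide_cons_self, Option.bind_some, slide_cons_of_add_two_le le_rfl]
  simp [Option.bind_map, slide_cons_succ]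

theorem slideBraid_cons_add_two (d : ℕ) (t : List ℕ) : SlideBraid ((d + 2) :: t) d := by
  unfold SlideBraid
  rw [slide_cons_of_add_two_le le_rfl, slide_cons_succ]
  simp [Option.bind_map, slide_cons_succ]

theorem slideBraid (t : List ℕ) (d : ℕ) : SlideBraid t d := by
  induction t, d using slide.induct with
  | case1 => simp [SlideBraid, slide]
  | case2 d ih =>
    rw [slideBraid_nil_iff]
    exact ih.cons (slide_cons_of_lt d.succ_pos) (slide_cons_of_lt (by omega))
  | case3 x t d hx ih =>
    refine ih.cons (slide_cons_of_lt hx) fun u => ?_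
    rw [slide_cons_of_lt (by omega)]
    congr 2
    omega
  | case4 t d => exact slideBraid_cons_self d t
  | case5 t d => exact slideBraid_cons_succ d t
  | case6 x t d h₁ h₂ h₃ ih =>
    obtain rfl | hx := eq_or_ne x (d + 2)
    · exact slideBraid_cons_add_two d t
    · exact ih.cons (slide_cons_of_add_two_le (by omega)) (slide_cons_of_add_two_le (by omega))

def ColumnHeight (T : Finset Cell) (i h : ℕ) : Prop := ∀ j, (i, j) ∈ T ↔ j < h

theorem ColumnHeight.snd_lt {T : Finset Cell} {i h : ℕ} (hcol : ColumnHeight T i h) {c : Cell}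
    (hc : c ∈ T) (hci : c.1 = i) : c.2 < h :=
  (hcol c.2).1 (by rwa [← hci])

variable {T T' : Finset Cell} {lo α d h : ℕ}

theorem slideAux_succ_iff (hlow : ∀ c ∈ T, c.1 = lo → c.1 + c.2 + 1 < α) :
    SlideAux T (lo + 1) α T' ↔ SlideAux T lo α T' := by
  have key : ∀ c ∈ T, lo ≤ c.1 → α ≤ c.1 + c.2 + 1 → lo + 1 ≤ c.1 := by
    intro c hc hlo hle
    by_contra hne
    have := hlow c hc (by omega)
    omega
  constructor
  · rintro (⟨_, _, h1, h2⟩ | ⟨_, _, _, h1, h2, h2', h3, hrec⟩ |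
        ⟨_, _, i, j, hmem, hi, hdiag, hmin, htop⟩ |
        ⟨_, _, i, j, _, hmem, hi, hdiag, hmin, h1, h2, hrec⟩)
    · exact .s1a _ _ (fun c hc hlo hd => h1 c hc (key c hc hlo (by omega)) hd)
        (fun c hc hlo hd => h2 c hc (key c hc hlo (by omega)) hd)
    · exact .s1c _ _ _ (fun c hc hlo hd => h1 c hc (key c hc hlo (by omega)) hd) h2 (by omega)
        h3 hrec
    · exact .s2a _ _ i j hmem (by omega) hdiag
        (fun c hc hlo hd => hmin c hc (key c hc hlo (by omega)) hd) htop
    · exact .s2c _ _ i j _ hmem (by omega) hdiag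
        (fun c hc hlo hd => hmin c hc (key c hc hlo (by omega)) hd) h1 h2 hrec
  · rintro (⟨_, _, h1, h2⟩ | ⟨_, _, _, h1, h2, h2', h3, hrec⟩ |
        ⟨_, _, i, j, hmem, hi, hdiag, hmin, htop⟩ |
        ⟨_, _, i, j, _, hmem, hi, hdiag, hmin, h1, h2, hrec⟩)
    · exact .s1a _ _ (fun c hc hlo => h1 c hc (by omega)) (fun c hc hlo => h2 c hc (by omega))
    · exact .s1c _ _ _ (fun c hc hlo => h1 c hc (by omega)) h2
        (key _ h2 (by omega) (by simp)) h3 hrec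
    · exact .s2a _ _ i j hmem (key _ hmem hi (by simp only; omega)) hdiag
        (fun c hc hlo => hmin c hc (by omega)) htop
    · exact .s2c _ _ i j _ hmem (key _ hmem hi (by simp only; omega)) hdiag
        (fun c hc hlo => hmin c hc (by omega)) h1 h2 hrec

theorem slideAux_column_cases (hcol : ColumnHeight T lo h) (hS : SlideAux T lo (lo + d) T') :
    (h < d ∧ SlideAux T (lo + 1) (lo + d) T') ∨ (h = d ∧ T' = insert (lo, h) T) ∨
      (d + 2 ≤ h ∧ SlideAux T (lo + 1) (lo + d + 1) T') := by
  rcases lt_or_ge h d with hd | hd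
  · refine .inl ⟨hd, (slideAux_succ_iff fun c hc hci => ?_).2 hS⟩
    have := hcol.snd_lt hc hci
    omega
  right
  have hdiag : 0 < d → (lo, d - 1) ∈ T := fun hpos => (hcol _).2 (by omega)
  generalize hα : lo + d = α at hS
  rcases hS with ⟨_, _, h1, h2⟩ | ⟨_, _, _, h1, h2, h2', h3, hrec⟩ |
      ⟨_, _, i, j, hmem, hi, hij, hmin, htop⟩ |
      ⟨_, _, i, j, _, hmem, hi, hij, hmin, h1, h2, hrec⟩
  · have hd0 : d = 0 := by
      by_contra hne
      exact h1 _ (hdiag (by omega)) le_rfl (by simp only; omega)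
    have hh0 : h = 0 := by
      by_contra hne
      exact h2 _ ((hcol 0).2 (by omega)) le_rfl (by simp only; omega)
    exact .inl ⟨by omega, by rw [← hα, hd0, hh0, add_zero]⟩
  · have hd0 : d = 0 := by
      by_contra hne
      exact h1 _ (hdiag (by omega)) le_rfl (by simp only; omega)
    subst hd0
    have : 1 < h := (hcol 1).1 (by rwa [← hα, add_zero] at h3)
    exact .inr ⟨by omega, by simpa [← hα] using hrec⟩
  · have hi' : i = lo := by
      have := hmin _ (hdiag (by omega)) le_rfl (by simp only; omega)
      omega
    subst hi'
    have : j < h := (hcol j).1 hmem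
    have : ¬ j + 1 < h := fun hlt => htop ((hcol _).2 hlt)
    exact .inl ⟨by omega, by rw [show h = j + 1 by omega]⟩
  · have hi' : i = lo := by
      have := hmin _ (hdiag (by omega)) le_rfl (by simp only; omega)
      omega
    subst hi'
    have : j + 2 < h := (hcol _).1 h2
    exact .inr ⟨by omega, by subst hα; exact hrec⟩

theorem slideAux_insert (hcol : ColumnHeight T lo d) :
    SlideAux T lo (lo + d) (insert (lo, d) T) := by
  rcases Nat.eq_zero_or_pos d with rfl | hd
  · refine .s1a _ _ (fun c _ hlo => by omega) fun c hc hlo hsum => ?_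
    exact absurd (hcol.snd_lt hc (by omega)) (by omega)
  · obtain ⟨j, rfl⟩ : ∃ j, d = j + 1 := ⟨d - 1, by omega⟩
    exact .s2a _ _ lo j ((hcol j).2 (by omega)) le_rfl (by omega) (fun c _ hlo _ => hlo)
      fun hmem => absurd ((hcol _).1 hmem) (by omega)

theorem slideAux_of_succ_succ (hcol : ColumnHeight T lo h) (hd : d + 2 ≤ h)
    (hS : SlideAux T (lo + 1) (lo + d + 1) T') : SlideAux T lo (lo + d) T' := by
  rcases Nat.eq_zero_or_pos d with rfl | hd
  · exact .s1c _ _ _ (fun c _ hlo => by omega) ((hcol 0).2 (by omega)) le_rfl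
      ((hcol 1).2 (by omega)) hS
  · obtain ⟨j, rfl⟩ : ∃ j, d = j + 1 := ⟨d - 1, by omega⟩
    exact .s2c _ _ lo j _ ((hcol j).2 (by omega)) le_rfl (by omega) (fun c _ hlo _ => hlo)
      ((hcol _).2 (by omega)) ((hcol _).2 (by omega))
      (by rwa [show lo + (j + 1) + 1 = lo + j + 2 by omega] at hS)

theorem slideAux_iff_column (hcol : ColumnHeight T lo h) :
    SlideAux T lo (lo + d) T' ↔
      (h < d ∧ SlideAux T (lo + 1) (lo + d) T') ∨ (h = d ∧ T' = insert (lo, h) T) ∨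
        (d + 2 ≤ h ∧ SlideAux T (lo + 1) (lo + d + 1) T') := by
  refine ⟨slideAux_column_cases hcol, ?_⟩
  rintro (⟨hd, hS⟩ | ⟨rfl, rfl⟩ | ⟨hd, hS⟩)
  · refine (slideAux_succ_iff fun c hc hci => ?_).1 hS
    have := hcol.snd_lt hc hci
    omega
  · exact slideAux_insert hcol
  · exact slideAux_of_succ_succ hcol hd hS

def Heights (T : Finset Cell) (lo : ℕ) (t : List ℕ) : Prop :=
  ∀ i, ColumnHeight T (lo + i) (t.getD i 0)

variable {x : ℕ} {t m : List ℕ}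

theorem heights_cons : Heights T lo (x :: t) ↔ ColumnHeight T lo x ∧ Heights T (lo + 1) t := by
  refine ⟨fun hT => ⟨hT 0, fun i => ?_⟩, fun ⟨hx, hT⟩ i => ?_⟩
  · have := hT (i + 1)
    rwa [show lo + (i + 1) = lo + 1 + i by omega] at this
  · cases i with
    | zero => exact hx
    | succ i =>
      show ColumnHeight T (lo + (i + 1)) (t.getD i 0)
      rw [show lo + (i + 1) = lo + 1 + i by omega]
      exact hT i

theorem heights_nil_iff : Heights T lo [] ↔ Heights T lo [0] := by
  have : ∀ i, ([] : List ℕ).getD i 0 = [0].getD i 0 := by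
    rintro (_ | _) <;> simp
  simp only [Heights, this]

theorem Heights.eq {T₁ T₂ : Finset Cell} (h₁ : Heights T₁ lo m) (h₂ : Heights T₂ lo m)
    (hbelow : ∀ i < lo, ∀ j, ((i, j) ∈ T₁ ↔ (i, j) ∈ T₂)) : T₁ = T₂ := by
  ext ⟨i, j⟩
  rcases lt_or_ge i lo with hi | hi
  · exact hbelow i hi j
  · obtain ⟨k, rfl⟩ := Nat.exists_eq_add_of_le hi
    rw [h₁ k j, h₂ k j]

theorem heights_insert (hT : Heights T lo (x :: t)) :
    Heights (insert (lo, x) T) lo ((x + 1) :: t) := by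
  rw [heights_cons] at hT ⊢
  refine ⟨fun j => ?_, fun i j => ?_⟩
  · rw [Finset.mem_insert, hT.1 j, Prod.mk.injEq]
    omega
  · rw [Finset.mem_insert, hT.2 i j, Prod.mk.injEq]
    omega

theorem eq_insert_iff (hT : Heights T lo (x :: t)) :
    T' = insert (lo, x) T ↔
      Heights T' lo ((x + 1) :: t) ∧ ∀ i < lo, ∀ j, ((i, j) ∈ T' ↔ (i, j) ∈ T) := by
  refine ⟨?_, fun ⟨hT', hbelow⟩ => hT'.eq (heights_insert hT) fun i hi j => ?_⟩
  · rintro rfl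
    refine ⟨heights_insert hT, fun i hi j => ?_⟩
    simp [hi.ne]
  · simp [hbelow i hi j, hi.ne]

theorem exists_map_cons_iff (hx : ColumnHeight T lo x) (o : Option (List ℕ)) :
    (∃ m, o.map (x :: ·) = some m ∧ Heights T' lo m ∧
        ∀ i < lo, ∀ j, ((i, j) ∈ T' ↔ (i, j) ∈ T)) ↔
      ∃ m, o = some m ∧ Heights T' (lo + 1) m ∧
        ∀ i < lo + 1, ∀ j, ((i, j) ∈ T' ↔ (i, j) ∈ T) := by
  constructor
  · rintro ⟨_, hm, hT', hbelow⟩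
    obtain ⟨m, rfl, rfl⟩ := Option.map_eq_some_iff.1 hm
    rw [heights_cons] at hT'
    refine ⟨m, rfl, hT'.2, fun i hi j => ?_⟩
    rcases Nat.lt_succ_iff_lt_or_eq.1 hi with hi | rfl
    · exact hbelow i hi j
    · rw [hT'.1 j, hx j]
  · rintro ⟨m, rfl, hT', hbelow⟩
    have hx' : ColumnHeight T' lo x := fun j => (hbelow lo (by omega) j).trans (hx j)
    exact ⟨x :: m, rfl, heights_cons.2 ⟨hx', hT'⟩, fun i hi => hbelow i (by omega)⟩

theorem slideAux_iff_slide (hT : Heights T lo t) :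
    SlideAux T lo (lo + d) T' ↔
      ∃ m, slide t d = some m ∧ Heights T' lo m ∧
        ∀ i < lo, ∀ j, ((i, j) ∈ T' ↔ (i, j) ∈ T) := by
  induction t, d using slide.induct generalizing lo T T' with
  | case1 =>
    rw [heights_nil_iff] at hT
    rw [slideAux_iff_column (heights_cons.1 hT).1, eq_insert_iff hT]
    simp [slide]
  | case2 d ih =>
    rw [heights_nil_iff, heights_cons] at hT
    rw [slideAux_iff_column hT.1, slide, exists_map_cons_iff hT.1, ← ih hT.2,
      show lo + 1 + d = lo + (d + 1) by omega]
    simp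
  | case3 x t d hx ih =>
    rw [heights_cons] at hT
    rw [slideAux_iff_column hT.1, slide_cons_of_lt hx, exists_map_cons_iff hT.1, ← ih hT.2]
    simp [hx, hx.ne, show ¬ d + 2 ≤ x by omega, show lo + d = lo + 1 + (d - 1) by omega]
  | case4 t d =>
    rw [slideAux_iff_column (heights_cons.1 hT).1, eq_insert_iff hT, slide_cons_self]
    simp
  | case5 t d =>
    rw [slideAux_iff_column (heights_cons.1 hT).1, slide_cons_succ]
    simp
  | case6 x t d h₁ h₂ h₃ ih =>
    rw [heights_cons] at hT
    rw [slideAux_iff_column hT.1, slide_cons_of_add_two_le (by omega), exists_map_cons_iff hT.1,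
      ← ih hT.2]
    simp [h₂, show ¬ x < d by omega, show d + 2 ≤ x by omega, Nat.add_right_comm]

theorem exists_heights (hT : IsTowerDiagram T) : ∃ t, Heights T 0 t := by
  set height : ℕ → ℕ := fun i => ({c ∈ T | c.1 = i}).sup (·.2 + 1)
  have hcol : ∀ i, ColumnHeight T i (height i) := fun i j => by
    simp only [height, Finset.lt_sup_iff, Finset.mem_filter]
    exact ⟨fun h => ⟨_, ⟨h, rfl⟩, j.lt_succ_self⟩,
      fun ⟨c, ⟨hc, hci⟩, hj⟩ => hci ▸ (hT c hc).2 j (by omega)⟩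
  set N := T.sup (·.1) + 1
  refine ⟨(List.range N).map height, fun i => ?_⟩
  rw [zero_add]
  rcases lt_or_ge i N with hi | hi
  · simpa [hi] using hcol i
  · have hempty : ColumnHeight T i 0 := fun j => by
      refine ⟨fun h => ?_, fun h => absurd h (Nat.not_lt_zero j)⟩
      have : i ≤ T.sup (·.1) := Finset.le_sup (f := (·.1)) h
      omega
    simpa [show ¬ i < N by omega] using hempty

theorem exists_finset_heights (lo : ℕ) (m : List ℕ) : ∃ T, Heights T lo m := by
  refine ⟨(Finset.range m.length).biUnion fun i => (Finset.range (m.getD i 0)).image (lo + i, ·),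
    fun i j => ?_⟩
  simp only [List.getD_eq_getElem?_getD, Finset.mem_biUnion, Finset.mem_range, Finset.mem_image,
    Prod.mk.injEq, Nat.add_left_cancel_iff, exists_eq_right_right, and_iff_right_iff_imp]
  intro hj
  by_contra hi
  simp [List.getElem?_eq_none (not_lt.1 hi)] at hj

theorem slides_iff (hT : Heights T 0 t) :
    Slides T d T' ↔ ∃ m, slide t d = some m ∧ Heights T' 0 m := by
  simpa [Slides] using slideAux_iff_slide (lo := 0) (d := d) (T' := T') hT

theorem exists_slides_slides_slides_iff (hT : Heights T 0 t) (a b c : ℕ) {U : Finset Cell} :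
    (∃ V W, Slides T a V ∧ Slides V b W ∧ Slides W c U) ↔
      ∃ m, ((slide t a).bind (slide · b)).bind (slide · c) = some m ∧ Heights U 0 m := by
  constructor
  · rintro ⟨V, W, hV, hW, hU⟩
    obtain ⟨m₁, e₁, hV⟩ := (slides_iff hT).1 hV
    obtain ⟨m₂, e₂, hW⟩ := (slides_iff hV).1 hW
    obtain ⟨m₃, e₃, hU⟩ := (slides_iff hW).1 hU
    exact ⟨m₃, by simp [e₁, e₂, e₃], hU⟩
  · rintro ⟨m₃, e, hU⟩
    obtain ⟨m₂, e₂, e₃⟩ := Option.bind_eq_some_iff.1 e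
    obtain ⟨m₁, e₁, e₂⟩ := Option.bind_eq_some_iff.1 e₂
    obtain ⟨V, hV⟩ := exists_finset_heights 0 m₁
    obtain ⟨W, hW⟩ := exists_finset_heights 0 m₂
    exact ⟨V, W, (slides_iff hT).2 ⟨m₁, e₁, hV⟩, (slides_iff hV).2 ⟨m₂, e₂, hW⟩,
      (slides_iff hW).2 ⟨m₃, e₃, hU⟩⟩

end TowerDiagram

theorem slides_braid_general
    (T : Finset Cell) (hT : IsTowerDiagram T)
    (α : ℕ) :
    (∃ U : Finset Cell,
        (∃ V W, Slides T α V ∧ Slides V (α + 1) W ∧ Slides W α U) ∧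
        (∃ V' W', Slides T (α + 1) V' ∧ Slides V' α W' ∧ Slides W' (α + 1) U)) ∨
      ((¬ ∃ U V W, Slides T α V ∧ Slides V (α + 1) W ∧ Slides W α U) ∧
        (¬ ∃ U V' W', Slides T (α + 1) V' ∧ Slides V' α W' ∧ Slides W' (α + 1) U)) := by
  obtain ⟨t, ht⟩ := TowerDiagram.exists_heights hT
  have hbraid : _ = _ := TowerDiagram.slideBraid t α
  simp only [TowerDiagram.exists_slides_slides_slides_iff ht, ← hbraid]
  rcases ((TowerDiagram.slide t α).bind (TowerDiagram.slide · (α + 1))).bind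
      (TowerDiagram.slide · α) with _ | L
  · simp
  · obtain ⟨U, hU⟩ := TowerDiagram.exists_finset_heights 0 L
    exact .inl ⟨U, ⟨L, rfl, hU⟩, ⟨L, rfl, hU⟩⟩

/-- Either both iterated slides `α ↘ ((α+1) ↘ (α ↘ T))` and
`(α+1) ↘ (α ↘ ((α+1) ↘ T))` are defined and equal, or both terminate without
result. -/
theorem slides_braid
    (T : Finset Cell) (hT : IsTowerDiagram T)
    (α : ℕ) (hα : 1 ≤ α) :
    (∃ U : Finset Cell,
        (∃ V W, Slides T α V ∧ Slides V (α + 1) W ∧ Slides W α U) ∧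
        (∃ V' W', Slides T (α + 1) V' ∧ Slides V' α W' ∧ Slides W' (α + 1) U)) ∨
      ((¬ ∃ U V W, Slides T α V ∧ Slides V (α + 1) W ∧ Slides W α U) ∧
        (¬ ∃ U V' W', Slides T (α + 1) V' ∧ Slides V' α W' ∧ Slides W' (α + 1) U)) :=
  slides_braid_general T hT α
end

section
/- Let α = α₁...αₙ be a word in SRW(ℤ⁺). Then the recording tableau R(α) is a standard tower tableau. -/
/-!
A non-terminating slide adds one cell on top of a tower (possibly a new one), so every `T_{≤k}`
is a tower diagram and the cell added at step `k` has nothing on top. It also has a flight path: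
if the slide placed it without jumping, no cell to its left lies on the previous diagonal and the
flight is direct; otherwise the last jump went over a cell `p` on the previous diagonal with a
cell on top, `p` is the closest such cell to the left, and the flight zigzags through `p`, which
has a flight path by the same argument. Flight paths only involve lower diagonals, so inserting
the new cell, which lies on a higher one, does not destroy them.
-/

lemma FlightPath.insert_of_le {T : Finset Cell} (c : Cell) {p : Cell} {P : Finset Cell}
    (h : FlightPath T p P) (hc : p.1 + p.2 ≤ c.1 + c.2) : FlightPath (insert c T) p P := by
  induction h with
  | direct i j hmem hnone =>
    refine .direct i j (Finset.mem_insert_of_mem hmem) fun q hq hcon => ?_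
    rcases Finset.mem_insert.mp hq with rfl | hq
    · omega
    · exact hnone q hq hcon
  | zigzag i j i' j' P hmem hmem' hleft hdiag hclosest hup _ ih =>
    refine .zigzag i j i' j' P (Finset.mem_insert_of_mem hmem) (Finset.mem_insert_of_mem hmem')
      hleft hdiag (fun q hq hq1 hq2 => ?_) (Finset.mem_insert_of_mem hup) (ih (by omega))
    rcases Finset.mem_insert.mp hq with rfl | hq
    · omega
    · exact hclosest q hq hq1 hq2

namespace IsTowerDiagram

variable {T : Finset Cell}

lemma insert_of_forall_lt (hT : IsTowerDiagram T) {i j : ℕ} (hi : 1 ≤ i)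
    (hbelow : ∀ j' < j, (i, j') ∈ T) : IsTowerDiagram (insert (i, j) T) := by
  intro d hd
  rcases Finset.mem_insert.mp hd with rfl | hd
  · refine ⟨hi, fun j' hj' => ?_⟩
    rcases hj'.lt_or_eq with hlt | rfl
    · exact Finset.mem_insert_of_mem (hbelow j' hlt)
    · exact Finset.mem_insert_self _ _
  · exact ⟨(hT d hd).1, fun j' hj' => Finset.mem_insert_of_mem ((hT d hd).2 j' hj')⟩

lemma above_notMem_insert (hT : IsTowerDiagram T) {c : Cell} (hc : c ∉ T) :
    (c.1, c.2 + 1) ∉ insert c T := by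
  intro h
  rcases Finset.mem_insert.mp h with h | h
  · simp [Prod.ext_iff] at h
  · exact hc ((hT _ h).2 c.2 (by omega))

lemma isCornerCell_insert (hT : IsTowerDiagram T) {c : Cell} (hc : c ∉ T)
    (hflight : ∃ P, FlightPath (insert c T) c P) : IsCornerCell (insert c T) c :=
  ⟨Finset.mem_insert_self c T, hT.above_notMem_insert hc, hflight⟩

end IsTowerDiagram

/-- The state in which a slide of `α` enters the towers in columns `≥ lo`: either at the very
start, or just after jumping over a cell `p` in column `lo - 1` on the diagonal `α - 1` that has a
flight path and a cell on top; `p` is what a zigzag flight path of the new cell goes through. -/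
def SlideEntry (T : Finset Cell) (lo α : ℕ) : Prop :=
  lo = 0 ∨ ∃ p ∈ T, p.1 + 1 = lo ∧ p.1 + p.2 + 1 = α ∧
    (p.1, p.2 + 1) ∈ T ∧ ∃ P, FlightPath T p P

namespace SlideEntry

variable {T : Finset Cell} {lo α : ℕ}

lemma le (h : SlideEntry T lo α) : lo ≤ α := by
  rcases h with rfl | ⟨p, -, hp, hpα, -⟩
  · exact Nat.zero_le α
  · omega

lemma insert_of_le (h : SlideEntry T lo α) (c : Cell) (hc : α ≤ c.1 + c.2) :
    SlideEntry (insert c T) lo α := by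
  rcases h with rfl | ⟨p, hpT, hp, hpα, hup, P, hP⟩
  · exact Or.inl rfl
  · exact Or.inr ⟨p, Finset.mem_insert_of_mem hpT, hp, hpα, Finset.mem_insert_of_mem hup,
      P, hP.insert_of_le c (by omega)⟩

lemma exists_flightPath (h : SlideEntry T lo α) {x y : ℕ} (hxy : (x, y) ∈ T)
    (hsum : x + y = α) (hlo : lo ≤ x)
    (hmin : ∀ q ∈ T, lo ≤ q.1 → q.1 + q.2 + 1 = α → x ≤ q.1) :
    ∃ P, FlightPath T (x, y) P := by
  rcases h with rfl | ⟨⟨p₁, p₂⟩, hpT, hp, hpα, hup, P, hP⟩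
  · refine ⟨_, .direct x y hxy fun q hq ⟨hqx, hqα⟩ => ?_⟩
    have := hmin q hq (Nat.zero_le _) (by omega)
    omega
  · refine ⟨_, .zigzag x y p₁ p₂ P hxy hpT (by omega) (by omega) (fun q hq hqx hqα => ?_) hup hP⟩
    by_cases hq' : lo ≤ q.1
    · have := hmin q hq hq' (by omega)
      omega
    · omega

end SlideEntry

lemma SlideAux.exists_corner_insert {T : Finset Cell} (hT : IsTowerDiagram T)
    {lo α : ℕ} {T' : Finset Cell} (h : SlideAux T lo α T') (hα : 1 ≤ α)
    (hentry : SlideEntry T lo α) :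
    ∃ c ∉ T, T' = insert c T ∧ IsTowerDiagram (insert c T) ∧ IsCornerCell (insert c T) c := by
  induction h with
  | s1a lo α h1 h2 =>
    have hnew : (α, 0) ∉ T := fun h => h2 _ h hentry.le rfl
    refine ⟨_, hnew, rfl, hT.insert_of_forall_lt hα (by omega),
      hT.isCornerCell_insert hnew ?_⟩
    refine (hentry.insert_of_le _ le_rfl).exists_flightPath (Finset.mem_insert_self _ _)
      (add_zero α) hentry.le fun q hq hqlo hqα => ?_
    rcases Finset.mem_insert.mp hq with rfl | hq
    · omega
    · exact absurd hqα (h1 q hq hqlo)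
  | s1c lo α T' h1 h2 _ h3 _ ih =>
    refine ih (by omega) (Or.inr ⟨_, h2, rfl, by omega, h3, ?_⟩)
    exact hentry.exists_flightPath h2 (add_zero α) hentry.le
      fun q hq hqlo hqα => absurd hqα (h1 q hq hqlo)
  | s2a lo α i j hmem hlo hdiag hmin htop =>
    refine ⟨_, htop, rfl,
      hT.insert_of_forall_lt (hT _ hmem).1 fun j' hj' => (hT _ hmem).2 j' (by omega),
      hT.isCornerCell_insert htop ?_⟩
    refine (hentry.insert_of_le _ (by omega)).exists_flightPath (Finset.mem_insert_self _ _)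
      (by omega) hlo fun q hq hqlo hqα => ?_
    rcases Finset.mem_insert.mp hq with rfl | hq
    · omega
    · exact hmin q hq hqlo hqα
  | s2c lo α i j T' hmem hlo hdiag hmin h1 h2 _ ih =>
    exact ih (by omega) (Or.inr ⟨_, h1, rfl, by omega, h2,
      hentry.exists_flightPath h1 (by omega) hlo hmin⟩)

lemma Slides.isCornerCell_insert {T : Finset Cell} (hT : IsTowerDiagram T) {a : ℕ} (ha : 1 ≤ a)
    {c : Cell} (hc : c ∉ T) (h : Slides T a (insert c T)) :
    IsTowerDiagram (insert c T) ∧ IsCornerCell (insert c T) c := by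
  obtain ⟨c', hc', heq, htower, hcorner⟩ := SlideAux.exists_corner_insert hT h ha (Or.inl rfl)
  obtain rfl : c = c' := by
    have : c ∈ insert c' T := heq ▸ Finset.mem_insert_self c T
    exact (Finset.mem_insert.mp this).resolve_right hc
  exact ⟨htower, hcorner⟩

lemma shapeOf_insert (c : Cell) (k : ℕ) (R : Finset (Cell × ℕ)) :
    shapeOf (insert (c, k) R) = insert c (shapeOf R) := by
  simp [shapeOf, Finset.image_insert]

lemma labelLE_insert_of_lt {R : Finset (Cell × ℕ)} (c : Cell) {k m : ℕ} (hkm : k < m) :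
    labelLE (insert (c, m) R) k = labelLE R k := by
  rw [labelLE, Finset.filter_insert, if_neg (by omega), labelLE]

lemma labelLE_of_forall_le {R : Finset (Cell × ℕ)} {k : ℕ} (h : ∀ p ∈ R, p.2 ≤ k) :
    labelLE R k = R :=
  Finset.filter_true_of_mem h

lemma IsTowerTableau.label_le_card {R : Finset (Cell × ℕ)} (hR : IsTowerTableau R)
    {p : Cell × ℕ} (hp : p ∈ R) : p.2 ≤ R.card := by
  have : p.2 ∈ R.image Prod.snd := Finset.mem_image_of_mem _ hp
  rw [hR.2.2] at this
  exact (Finset.mem_Icc.mp this).2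

lemma IsTowerTableau.insert_card_add_one {R : Finset (Cell × ℕ)} (hR : IsTowerTableau R) {c : Cell}
    (hc : c ∉ shapeOf R) (htower : IsTowerDiagram (insert c (shapeOf R))) :
    IsTowerTableau (insert (c, R.card + 1) R) := by
  have hnew : (c, R.card + 1) ∉ R := fun h => hc (Finset.mem_image_of_mem _ h)
  refine ⟨by rwa [shapeOf_insert], fun p hp q hq hpq => ?_, ?_⟩
  · have hmem : ∀ r ∈ R, r.1 ≠ c := fun r hr hrc => hc (hrc ▸ Finset.mem_image_of_mem _ hr)
    rcases Finset.mem_insert.mp hp with rfl | hp <;> rcases Finset.mem_insert.mp hq with rfl | hq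
    · rfl
    · exact absurd hpq.symm (hmem q hq)
    · exact absurd hpq (hmem p hp)
    · exact hR.2.1 p hp q hq hpq
  · rw [Finset.image_insert, hR.2.2, Finset.card_insert_of_notMem hnew]
    ext x
    simp only [Finset.mem_insert, Finset.mem_Icc]
    omega

lemma IsStandardTowerTableau.insert_card_add_one {R : Finset (Cell × ℕ)} (hR : IsStandardTowerTableau R)
    {c : Cell} (hc : c ∉ shapeOf R) (htower : IsTowerDiagram (insert c (shapeOf R)))
    (hcorner : IsCornerCell (insert c (shapeOf R)) c) :
    IsStandardTowerTableau (insert (c, R.card + 1) R) := by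
  refine ⟨hR.1.insert_card_add_one hc htower, fun p hp => ?_⟩
  rcases Finset.mem_insert.mp hp with rfl | hp
  · have hall : ∀ q ∈ insert (c, R.card + 1) R, q.2 ≤ R.card + 1 := by
      intro q hq
      rcases Finset.mem_insert.mp hq with rfl | hq
      · exact le_rfl
      · exact (hR.1.label_le_card hq).trans (Nat.le_succ _)
    rw [labelLE_of_forall_le hall, shapeOf_insert]
    exact ⟨htower, hcorner⟩
  · rw [labelLE_insert_of_lt c (Nat.lt_succ_of_le (hR.1.label_le_card hp))]
    exact hR.2 p hp

lemma isStandardTowerTableau_empty : IsStandardTowerTableau ∅ :=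
  ⟨⟨by simp [IsTowerDiagram, shapeOf], by simp, by simp⟩, by simp⟩

lemma SRRecord.card_eq {w : List ℕ} {R : Finset (Cell × ℕ)} (h : SRRecord w R) :
    R.card = w.length := by
  induction h with
  | nil => rfl
  | @snoc w R a c _ hc _ ih =>
    rw [Finset.card_insert_of_notMem fun h => hc (Finset.mem_image_of_mem _ h), ih,
      List.length_append, List.length_singleton]

/-- The recording tableau of any word in `SRW(ℤ⁺)` is a
standard tower tableau. -/
theorem recording_tableau_standard
    (w : List ℕ) (hw : IsPosWord w)
    (R : Finset (Cell × ℕ)) (hR : SRRecord w R) :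
    IsStandardTowerTableau R := by
  induction hR with
  | nil => exact isStandardTowerTableau_empty
  | @snoc w R a c hwR hc ha ih =>
    have hR : IsStandardTowerTableau R := ih fun x hx => hw x (List.mem_append_left _ hx)
    obtain ⟨htower, hcorner⟩ :=
      Slides.isCornerCell_insert hR.1.1 (hw a (by simp)) hc ha
    rw [← hwR.card_eq]
    exact hR.insert_card_add_one hc htower hcorner
end

section
/- Let α = α₁...αₙ and β = β₁...βₙ be two words in SRW(ℤ⁺). If s_[α] = s_[β] (the two words represent the same permutation), then shape(R(α)) = shape(R(β)). -/
/-!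
If a word `w` represents `ω`, the diagram built from it by the SR algorithm is the one whose
tower in column `i` has height `c_i`, the `i`-th entry of the Lehmer code of `σ = ω⁻¹`; so it
depends on `ω` only. Inductively, sliding a letter `a` into this diagram adds one cell on top of
tower `p = σ⁻¹ a` and succeeds only if `p < q = σ⁻¹ (a + 1)`, which is how the code changes
under `σ ↦ s_a σ`. To follow the slide of a letter `α` into the towers `≥ lo`, let `r ≥ lo` be
the first position with `σ r ≥ a`. The towers strictly between `lo` and `r` end below the
diagonal `x + y = α - 1`, and the identity `i + c_i = σ i + #{j < i | σ j > σ i}` shows that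
tower `r` ends on that diagonal exactly when `r = p` (the new cell goes on top of it), one step
above it when `r = q` (the slide terminates), and at least two steps above it otherwise, when
the slide bumps and continues with `α + 1` to the right of `r`.
-/

open Finset Equiv

/-- The `i`-th entry of the Lehmer code of `σ`, the number of `j > i` with `σ j < σ i`, counted
through the values `σ j` so that the set is visibly finite: row `i` of the Rothe diagram. -/
def lehmerCode (σ : Perm ℕ) (i : ℕ) : ℕ := #{v ∈ range (σ i) | i < σ⁻¹ v}

def aboveCount (σ : Perm ℕ) (x n : ℕ) : ℕ := #{j ∈ range n | x < σ j}

def codeDiagram (σ : Perm ℕ) : Set Cell := {c | 1 ≤ c.1 ∧ c.2 < lehmerCode σ c.1}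

section LehmerCode

variable {σ : Perm ℕ} {a p q x y n lo : ℕ}

theorem add_lehmerCode (σ : Perm ℕ) (i : ℕ) :
    i + lehmerCode σ i = σ i + aboveCount σ (σ i) i := by
  have hvalues := card_filter_add_card_filter_not (s := range (σ i)) (fun v => i < σ⁻¹ v)
  have hpositions := card_filter_add_card_filter_not (s := range i) (fun j => σ i < σ j)
  have hbij : #{v ∈ range (σ i) | ¬ i < σ⁻¹ v} = #{j ∈ range i | ¬ σ i < σ j} := by
    refine card_nbij' (σ⁻¹ ·) (σ ·) ?_ ?_ (fun v _ => by simp) (fun j _ => by simp)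
    · intro v hv
      simp only [coe_filter, mem_range, Set.mem_ofPred_eq, not_lt] at hv ⊢
      have : σ⁻¹ v ≠ i := fun h => by subst h; simp at hv
      exact ⟨by omega, by simpa using hv.1.le⟩
    · intro j hj
      simp only [coe_filter, mem_range, Set.mem_ofPred_eq, not_lt] at hj ⊢
      have : σ j ≠ σ i := fun h => by simp at h; omega
      exact ⟨by omega, by simpa using hj.1.le⟩
  simp only [card_range] at hvalues hpositions
  rw [lehmerCode, aboveCount]
  omega

theorem aboveCount_succ (h : x < σ n) : aboveCount σ x (n + 1) = aboveCount σ x n + 1 := by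
  simp [aboveCount, range_add_one, filter_insert, h]

theorem aboveCount_eq_of_le (hn : lo ≤ n) (h : ∀ j, lo ≤ j → j < n → σ j ≤ x) :
    aboveCount σ x n = aboveCount σ x lo := by
  unfold aboveCount
  congr 1
  ext j
  simp only [mem_filter, mem_range]
  constructor
  · rintro ⟨hj, hx⟩
    refine ⟨?_, hx⟩
    by_contra! hlo
    have := h j hlo hj
    omega
  · rintro ⟨hj, hx⟩
    exact ⟨by omega, hx⟩

theorem aboveCount_eq_add (hxy : x ≤ y) :
    aboveCount σ x n = aboveCount σ y n + #{j ∈ range n | σ j ∈ Ioc x y} := by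
  rw [aboveCount, aboveCount, ← card_union_of_disjoint]
  · congr 1
    ext j
    simp only [mem_filter, mem_union, mem_Ioc, mem_range]
    omega
  · rw [disjoint_filter]
    intro j _ h
    simp only [mem_Ioc]
    omega

theorem le_add_aboveCount (h : ∀ j < n, σ j ≠ x) : n ≤ x + aboveCount σ x n := by
  have hsplit := card_filter_add_card_filter_not (s := range n) (fun j => x < σ j)
  have hbelow : #{j ∈ range n | ¬ x < σ j} ≤ x := by
    simpa using card_le_card_of_injOn (t := range x) σ
      (fun j hj => by
        simp only [coe_filter, mem_range, Set.mem_ofPred_eq] at hj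
        have := h j hj.1
        simp only [coe_range, Set.mem_Iio]; omega)
      σ.injective.injOn
  rw [card_range] at hsplit
  rw [aboveCount]
  omega

theorem lehmerCode_swap_mul (hp : σ p = a) (hq : σ q = a + 1) (hpq : p < q) :
    lehmerCode (swap a (a + 1) * σ) = Function.update (lehmerCode σ) p (lehmerCode σ p + 1) := by
  have hinv : ∀ v, (swap a (a + 1) * σ)⁻¹ v = σ⁻¹ (swap a (a + 1) v) := fun v => by
    simp [mul_inv_rev, swap_inv]
  have hfix : ∀ v < a, swap a (a + 1) v = v := fun v hv =>
    swap_apply_of_ne_of_ne (by omega) (by omega)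
  have hpa : σ⁻¹ a = p := by simp [← hp]
  have hqa : σ⁻¹ (a + 1) = q := by simp [← hq]
  funext i
  simp only [lehmerCode, hinv, Perm.mul_apply]
  rcases eq_or_ne i p with rfl | hip
  · rw [Function.update_self, hp, swap_apply_left, range_add_one, filter_insert,
      swap_apply_left, hqa, if_pos hpq, card_insert_of_notMem (by simp)]
    congr 2
    exact filter_congr fun v hv => by rw [hfix v (mem_range.1 hv)]
  rw [Function.update_of_ne hip]
  rcases eq_or_ne i q with rfl | hiq
  · rw [lehmerCode, hq, swap_apply_right, range_add_one, filter_insert, hpa, if_neg (by omega)]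
    exact congrArg card (filter_congr fun v hv => by rw [hfix v (mem_range.1 hv)])
  have hσa : σ i ≠ a := fun h => hip (σ.injective (h.trans hp.symm))
  have hσa1 : σ i ≠ a + 1 := fun h => hiq (σ.injective (h.trans hq.symm))
  have hlt : ∀ v, swap a (a + 1) v < σ i ↔ v < σ i := fun v => by
    rw [swap_apply_def]
    split_ifs <;> omega
  rw [lehmerCode, swap_apply_of_ne_of_ne hσa hσa1]
  refine card_nbij' (swap a (a + 1) ·) (swap a (a + 1) ·) ?_ ?_ (fun v _ => by simp)
    (fun v _ => by simp)
  · intro v hv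
    simp only [coe_filter, mem_range, Set.mem_ofPred_eq] at hv ⊢
    exact ⟨(hlt v).2 hv.1, hv.2⟩
  · intro v hv
    simp only [coe_filter, mem_range, Set.mem_ofPred_eq, swap_apply_self] at hv ⊢
    exact ⟨(hlt v).2 hv.1, hv.2⟩

theorem codeDiagram_swap_mul (hp : σ p = a) (hq : σ q = a + 1) (hpq : p < q) (hp1 : 1 ≤ p) :
    codeDiagram (swap a (a + 1) * σ) = insert (p, lehmerCode σ p) (codeDiagram σ) := by
  ext ⟨i, j⟩
  simp only [codeDiagram, Set.mem_insert_iff, Set.mem_ofPred_eq, Prod.mk.injEq,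
    lehmerCode_swap_mul hp hq hpq]
  rcases eq_or_ne i p with rfl | hip
  · simp only [Function.update_self, true_and]
    omega
  · simp [hip]

end LehmerCode

def FirstAtLeast (σ : Perm ℕ) (a lo r : ℕ) : Prop :=
  lo ≤ r ∧ a ≤ σ r ∧ ∀ j, lo ≤ j → j < r → σ j < a

namespace FirstAtLeast

variable {σ : Perm ℕ} {a p q lo r i j : ℕ}

theorem exists_of_le (hp : a ≤ σ p) (hlop : lo ≤ p) : ∃ r, FirstAtLeast σ a lo r := by
  classical
  have hex : ∃ r, lo ≤ r ∧ a ≤ σ r := ⟨p, hlop, hp⟩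
  refine ⟨Nat.find hex, (Nat.find_spec hex).1, (Nat.find_spec hex).2, fun j hj hjr => ?_⟩
  by_contra! h
  exact Nat.find_min hex hjr ⟨hj, h⟩

theorem le_of_le (h : FirstAtLeast σ a lo r) (hj : lo ≤ j) (hja : a ≤ σ j) : r ≤ j := by
  by_contra! hjr
  exact absurd (h.2.2 j hj hjr) (not_lt.2 hja)

theorem aboveCount_eq (h : FirstAtLeast σ a lo r) (hi : lo ≤ i) (hir : i ≤ r) :
    aboveCount σ a i = aboveCount σ a lo :=
  aboveCount_eq_of_le hi fun j hj hji => (h.2.2 j hj (by omega)).le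

theorem one_le (h : FirstAtLeast σ a lo r) (hσ0 : σ 0 = 0) (ha : 1 ≤ a) : 1 ≤ r :=
  Nat.pos_of_ne_zero fun hr => by
    have := h.2.1
    rw [hr, hσ0] at this
    omega

theorem le_add_aboveCount (h : FirstAtLeast σ a lo r) (hp : σ p = a) (hlop : lo ≤ p) :
    r ≤ a + aboveCount σ a lo := by
  have hrp : r ≤ p := h.le_of_le hlop hp.ge
  rw [← h.aboveCount_eq h.1 le_rfl]
  exact _root_.le_add_aboveCount fun j hj hja => by
    have := σ.injective (hja.trans hp.symm)
    omega

theorem add_lehmerCode_lt (h : FirstAtLeast σ a lo r) (hp : σ p = a) (hlop : lo ≤ p)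
    (hi : lo ≤ i) (hir : i < r) : i + lehmerCode σ i < a + aboveCount σ a lo := by
  have hσi : σ i < a := h.2.2 i hi hir
  have hrp : r ≤ p := h.le_of_le hlop hp.ge
  have hbetween : #{j ∈ range i | σ j ∈ Ioc (σ i) a} ≤ a - σ i - 1 := by
    simpa using card_le_card_of_injOn (t := Ioo (σ i) a) σ
      (fun j hj => by
        simp only [coe_filter, mem_range, Set.mem_ofPred_eq] at hj
        have hja : σ j ≠ a := fun hja => by
          have := σ.injective (hja.trans hp.symm)
          omega
        simp only [coe_Ioo, Set.mem_Ioo]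
        omega)
      σ.injective.injOn
  rw [add_lehmerCode, aboveCount_eq_add hσi.le, h.aboveCount_eq hi hir.le]
  omega

theorem add_lehmerCode_cases (h : FirstAtLeast σ a lo r) (hp : σ p = a) (hq : σ q = a + 1)
    (hlop : lo ≤ p) (hloq : lo ≤ q) :
    r = p ∧ p < q ∧ r + lehmerCode σ r = a + aboveCount σ a lo ∨
    r = q ∧ r + lehmerCode σ r = a + aboveCount σ a lo + 1 ∨
    r < p ∧ r < q ∧ a < σ r ∧ a + aboveCount σ a lo + 2 ≤ r + lehmerCode σ r := by
  have hrp : r ≤ p := h.le_of_le hlop hp.ge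
  have hrq : r ≤ q := h.le_of_le hloq (by omega)
  have hpq : p ≠ q := fun hpq => by
    rw [hpq, hq] at hp
    omega
  rw [add_lehmerCode, ← h.aboveCount_eq h.1 le_rfl]
  rcases (show σ r = a ∨ σ r = a + 1 ∨ a + 1 < σ r by have := h.2.1; omega) with hr | hr | hr
  · obtain rfl : r = p := σ.injective (hr.trans hp.symm)
    exact Or.inl ⟨rfl, lt_of_le_of_ne hrq hpq, by rw [hr]⟩
  · have hrq : r = q := σ.injective (hr.trans hq.symm)
    have hnone : #{j ∈ range r | σ j ∈ Ioc a (a + 1)} = 0 := by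
      refine card_eq_zero.2 (filter_eq_empty_iff.2 fun j hj hja => ?_)
      have := σ.injective ((show σ j = a + 1 by simp at hja; omega).trans hq.symm)
      simp at hj
      omega
    rw [hr, aboveCount_eq_add (by omega : a ≤ a + 1), hnone]
    exact Or.inr (Or.inl ⟨hrq, by omega⟩)
  · have hrp' : r ≠ p := fun h => by simp [h, hp] at hr
    have hrq' : r ≠ q := fun h => by simp [h, hq] at hr
    have hbetween : #{j ∈ range r | σ j ∈ Ioc a (σ r)} ≤ σ r - a - 2 := by
      have : #{j ∈ range r | σ j ∈ Ioc a (σ r)} ≤ #((Ioo a (σ r)).erase (a + 1)) :=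
        card_le_card_of_injOn σ
        (fun j hj => by
          simp only [coe_filter, mem_range, mem_Ioc, Set.mem_ofPred_eq] at hj
          have hjr : σ j ≠ σ r := fun hjr => by simp at hjr; omega
          have hjq : σ j ≠ a + 1 := fun hjq => by
            have := σ.injective (hjq.trans hq.symm)
            omega
          simp only [coe_erase, coe_Ioo, Set.mem_sdiff, Set.mem_Ioo, Set.mem_singleton_iff]
          omega)
        σ.injective.injOn
      rwa [card_erase_of_mem (by simp; omega), Nat.card_Ioo] at this
    rw [aboveCount_eq_add (x := a) (y := σ r) (n := r) (by omega)]
    exact Or.inr (Or.inr ⟨by omega, by omega, by omega, by omega⟩)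

end FirstAtLeast

theorem mem_iff_of_coe_eq_codeDiagram {σ : Perm ℕ} {T : Finset Cell}
    (hT : (T : Set Cell) = codeDiagram σ) {i j : ℕ} :
    (i, j) ∈ T ↔ 1 ≤ i ∧ j < lehmerCode σ i := by
  rw [← mem_coe, hT]
  rfl

/-- The slide of `a` into the code diagram `T` of `σ`, at the moment it enters the towers `≥ lo`
as the letter `α`. -/
structure SlideInvariant (σ : Perm ℕ) (T : Finset Cell) (a p q lo α : ℕ) : Prop where
  coe_eq : (T : Set Cell) = codeDiagram σ
  map_zero : σ 0 = 0
  one_le : 1 ≤ a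
  apply_p : σ p = a
  apply_q : σ q = a + 1
  lo_le_p : lo ≤ p
  lo_le_q : lo ≤ q
  eq_add : α = a + aboveCount σ a lo

namespace SlideInvariant

variable {σ : Perm ℕ} {T T' : Finset Cell} {a p q lo α r i j : ℕ}

theorem exists_firstAtLeast (S : SlideInvariant σ T a p q lo α) :
    ∃ r, FirstAtLeast σ a lo r :=
  FirstAtLeast.exists_of_le S.apply_p.ge S.lo_le_p

theorem add_one_lt_of_lt (S : SlideInvariant σ T a p q lo α) (h : FirstAtLeast σ a lo r)
    (hij : (i, j) ∈ T) (hi : lo ≤ i) (hir : i < r) : i + j + 1 < α := by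
  have := (mem_iff_of_coe_eq_codeDiagram S.coe_eq).1 hij
  have := h.add_lehmerCode_lt S.apply_p S.lo_le_p hi hir
  rw [S.eq_add]
  omega

theorem le_add_lehmerCode (S : SlideInvariant σ T a p q lo α) (h : FirstAtLeast σ a lo r) :
    α ≤ r + lehmerCode σ r := by
  rw [S.eq_add]
  rcases h.add_lehmerCode_cases S.apply_p S.apply_q S.lo_le_p S.lo_le_q with h | h | h <;> omega

theorem mem_of_lt (S : SlideInvariant σ T a p q lo α) (h : FirstAtLeast σ a lo r)
    (hrα : r < α) : (r, α - 1 - r) ∈ T := by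
  rw [mem_iff_of_coe_eq_codeDiagram S.coe_eq]
  have := S.le_add_lehmerCode h
  exact ⟨h.one_le S.map_zero S.one_le, by omega⟩

theorem eq_of_forall_ne (S : SlideInvariant σ T a p q lo α) (h : FirstAtLeast σ a lo r)
    (hnone : ∀ c ∈ T, lo ≤ c.1 → c.1 + c.2 + 1 ≠ α) : r = α := by
  have := h.le_add_aboveCount S.apply_p S.lo_le_p
  rw [← S.eq_add] at this
  by_contra hrα
  exact hnone _ (S.mem_of_lt h (by omega)) h.1 (by dsimp only; omega)

theorem eq_of_isLeast (S : SlideInvariant σ T a p q lo α) (h : FirstAtLeast σ a lo r)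
    (hij : (i, j) ∈ T) (hi : lo ≤ i) (hdiag : i + j + 1 = α)
    (hmin : ∀ c ∈ T, lo ≤ c.1 → c.1 + c.2 + 1 = α → i ≤ c.1) : i = r := by
  have hri : r ≤ i := by
    by_contra! hir
    exact absurd (S.add_one_lt_of_lt h hij hi hir) (by omega)
  have := hmin _ (S.mem_of_lt h (by omega)) h.1 (by dsimp only; omega)
  omega

theorem eq_of_add_lehmerCode_eq (S : SlideInvariant σ T a p q lo α)
    (h : FirstAtLeast σ a lo r) (hr : r + lehmerCode σ r = α) :
    r = p ∧ p < q := by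
  rw [S.eq_add] at hr
  rcases h.add_lehmerCode_cases S.apply_p S.apply_q S.lo_le_p S.lo_le_q with h' | h' | h'
  · exact ⟨h'.1, h'.2.1⟩
  all_goals omega

theorem next (S : SlideInvariant σ T a p q lo α) (h : FirstAtLeast σ a lo r)
    (hr : α + 2 ≤ r + lehmerCode σ r) : SlideInvariant σ T a p q (r + 1) (α + 1) := by
  rw [S.eq_add] at hr
  rcases h.add_lehmerCode_cases S.apply_p S.apply_q S.lo_le_p S.lo_le_q
    with h' | h' | ⟨hrp, hrq, hσr, -⟩
  · omega
  · omega
  refine { S with lo_le_p := hrp, lo_le_q := hrq, eq_add := ?_ }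
  rw [aboveCount_succ hσr, h.aboveCount_eq h.1 le_rfl, S.eq_add, add_assoc]

theorem slideAux (S : SlideInvariant σ T a p q lo α) (hslide : SlideAux T lo α T') :
    p < q ∧ T' = insert (p, lehmerCode σ p) T := by
  induction hslide with
  | s1a lo α hnone hnone' =>
    obtain ⟨r, h⟩ := S.exists_firstAtLeast
    obtain rfl := S.eq_of_forall_ne h hnone
    have hcode : lehmerCode σ r = 0 := by
      by_contra hne
      refine hnone' (r, 0) ?_ h.1 rfl
      exact (mem_iff_of_coe_eq_codeDiagram S.coe_eq).2 ⟨h.one_le S.map_zero S.one_le, by omega⟩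
    obtain ⟨rfl, hpq⟩ := S.eq_of_add_lehmerCode_eq h (by omega)
    exact ⟨hpq, by rw [hcode]⟩
  | s1c lo α T' hnone _ _ h1 _ ih =>
    obtain ⟨r, h⟩ := S.exists_firstAtLeast
    obtain rfl := S.eq_of_forall_ne h hnone
    have := ((mem_iff_of_coe_eq_codeDiagram S.coe_eq).1 h1).2
    exact ih (S.next h (by omega))
  | s2a lo α i j hij hi hdiag hmin htop =>
    obtain ⟨r, h⟩ := S.exists_firstAtLeast
    obtain rfl := S.eq_of_isLeast h hij hi hdiag hmin
    have hcode : lehmerCode σ i = j + 1 := by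
      have := ((mem_iff_of_coe_eq_codeDiagram S.coe_eq).1 hij).2
      have := (mem_iff_of_coe_eq_codeDiagram S.coe_eq).not.1 htop
      have := h.one_le S.map_zero S.one_le
      omega
    obtain ⟨rfl, hpq⟩ := S.eq_of_add_lehmerCode_eq h (by omega)
    exact ⟨hpq, by rw [hcode]⟩
  | s2c lo α i j T' hij hi hdiag hmin _ h2 _ ih =>
    obtain ⟨r, h⟩ := S.exists_firstAtLeast
    obtain rfl := S.eq_of_isLeast h hij hi hdiag hmin
    have := ((mem_iff_of_coe_eq_codeDiagram S.coe_eq).1 h2).2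
    exact ih (S.next h (by omega))

end SlideInvariant

theorem permOf_append_singleton (w : List ℕ) (b : ℕ) :
    permOf (w ++ [b]) = permOf w * swap b (b + 1) := by
  simp [permOf]

theorem permOf_apply_zero {w : List ℕ} (hw : IsPosWord w) : permOf w 0 = 0 := by
  induction w with
  | nil => rfl
  | cons b w ih =>
    have hb : 1 ≤ b := hw b List.mem_cons_self
    simp only [permOf, List.map_cons, List.prod_cons, Perm.mul_apply] at ih ⊢
    rw [ih fun c hc => hw c (List.mem_cons_of_mem b hc)]
    exact swap_apply_of_ne_of_ne (by omega) (by omega)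

theorem SRDiagram.coe_eq_codeDiagram {w : List ℕ} {T : Finset Cell} (hT : SRDiagram w T)
    (hw : IsPosWord w) : (T : Set Cell) = codeDiagram (permOf w)⁻¹ := by
  induction hT with
  | nil =>
    have hcode (i : ℕ) : lehmerCode (permOf [])⁻¹ i = 0 :=
      card_eq_zero.2 (filter_eq_empty_iff.2 fun v hv => by simp [permOf] at hv ⊢; omega)
    ext
    simp [codeDiagram, hcode]
  | @snoc w T T' b _ hslide ih =>
    have hwb : IsPosWord w := fun c hc => hw c (List.mem_append_left _ hc)
    have hb : 1 ≤ b := hw b (by simp)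
    have hp1 : 1 ≤ permOf w b := by
      by_contra! h0
      have := (permOf w).injective ((Nat.lt_one_iff.1 h0).trans (permOf_apply_zero hwb).symm)
      omega
    have S : SlideInvariant (permOf w)⁻¹ T b (permOf w b) (permOf w (b + 1)) 0 b :=
      { coe_eq := ih hwb
        map_zero := Perm.inv_eq_iff_eq.2 (permOf_apply_zero hwb).symm
        one_le := hb
        apply_p := by simp
        apply_q := by simp
        lo_le_p := Nat.zero_le _
        lo_le_q := Nat.zero_le _
        eq_add := by simp [aboveCount] }
    obtain ⟨hpq, rfl⟩ := S.slideAux hslide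
    rw [coe_insert, ih hwb, permOf_append_singleton, mul_inv_rev, swap_inv,
      codeDiagram_swap_mul S.apply_p S.apply_q hpq hp1]

theorem same_perm_implies_same_shape_general
    (w w' : List ℕ) (hw : IsPosWord w) (hw' : IsPosWord w')
    (T T' : Finset Cell) (hT : SRDiagram w T) (hT' : SRDiagram w' T')
    (hperm : permOf w = permOf w') :
    T = T' := by
  rw [← coe_inj, hT.coe_eq_codeDiagram hw, hT'.coe_eq_codeDiagram hw', hperm]

/-- Two words in `SRW(ℤ⁺)` of the same length representing the
same permutation have recording tableaux of the same shape. -/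
theorem same_perm_implies_same_shape
    (w w' : List ℕ) (hw : IsPosWord w) (hw' : IsPosWord w')
    (hlen : w.length = w'.length)
    (T T' : Finset Cell) (hT : SRDiagram w T) (hT' : SRDiagram w' T')
    (hperm : permOf w = permOf w') :
    T = T' :=
  same_perm_implies_same_shape_general w w' hw hw' T T' hT hT' hperm
end
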